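/- arXiv:2507.06896 — 12 statements merged into one kernel-verified Lean document; each statement's English description precedes it below -/
import Mathlib

section
/- Let Σ be a finite alphabet and let θ : ℤ → R be a rule distribution over a finite set R of local rules of radius at most r, defining a non-uniform cellular automaton H_θ : Σ^ℤ → Σ^ℤ. If θ is uniformly recurrent (every finite pattern occurring in θ occurs syndetically, i.e., with bounded gaps) and H_θ is injective, then for every rule distribution φ in the orbit closure of θ under the shift, the non-uniform cellular automaton H_φ is injective (i.e., H_θ is stably injective). -/
open Function

/-- `f` is a local rule of radius (at most) `r`: it only depends on coordinates in `[-r, r]`. -/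
def IsLocalRule {A : Type*} (r : ℕ) (f : (ℤ → A) → A) : Prop :=
  ∀ u v : ℤ → A, (∀ i : ℤ, -(r : ℤ) ≤ i → i ≤ (r : ℤ) → u i = v i) → f u = f v

/-- The global map of the non-uniform cellular automaton with rule distribution `θ`. -/
def nuca {A : Type*} (θ : ℤ → ((ℤ → A) → A)) (c : ℤ → A) : ℤ → A :=
  fun x => θ x (fun i => c (x + i))

/-- A configuration `θ : ℤ → R` is (spatially) recurrent: every finite pattern
occurs in some other (translated) position. -/
def Recurrent {R : Type*} (θ : ℤ → R) : Prop :=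
  ∀ (a : ℤ) (m : ℕ), ∃ k : ℤ, k ≠ 0 ∧ ∀ i : ℕ, i < m → θ (a + k + i) = θ (a + i)

/-- A configuration `θ : ℤ → R` is (spatially) uniformly recurrent: every finite pattern
occurs with bounded gaps. -/
def UnifRecurrent {R : Type*} (θ : ℤ → R) : Prop :=
  ∀ (a : ℤ) (m : ℕ), ∃ n : ℕ, ∀ x : ℤ, ∃ k : ℤ, x ≤ k ∧ k ≤ x + (n : ℤ) ∧
    ∀ i : ℕ, i < m → θ (k + i) = θ (a + i)

/-- `φ` lies in the orbit closure of `θ` under the shift (combinatorial characterization: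
every finite pattern of `φ` occurs in `θ`). -/
def InOrbitClosure {R : Type*} (φ θ : ℤ → R) : Prop :=
  ∀ (a : ℤ) (m : ℕ), ∃ k : ℤ, ∀ i : ℕ, i < m → φ (a + i) = θ (a + k + i)

/-- The radius-`r` neighbourhood of a finite domain `D`. -/
noncomputable def nbhd (r : ℕ) (D : Finset ℤ) : Finset ℤ :=
  D.biUnion (fun x => Finset.Icc (x - (r : ℤ)) (x + (r : ℤ)))

/-- A NUCA (with radius-`r` rules) is balanced: every pattern on a finite domain `D` has
exactly `|Σ|^(|N(D)|-|D|)` preimage patterns on the neighbourhood `N(D)`. -/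
def NucaBalanced {A : Type*} [Fintype A] (r : ℕ) (θ : ℤ → ((ℤ → A) → A)) : Prop :=
  ∀ (D : Finset ℤ) (p : ℤ → A),
    Nat.card {q : { y : ℤ // y ∈ nbhd r D } → A //
      ∀ c : ℤ → A, (∀ i : { y : ℤ // y ∈ nbhd r D }, c i.1 = q i) →
        ∀ x ∈ D, nuca θ c x = p x} =
      Fintype.card A ^ ((nbhd r D).card - D.card)

/-- `c` is an equicontinuity point of the NUCA `θ`. -/
def EqPt {A : Type*} (θ : ℤ → ((ℤ → A) → A)) (c : ℤ → A) : Prop :=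
  ∀ E : Finset ℤ, ∃ D : Finset ℤ, ∀ e : ℤ → A, (∀ x ∈ D, e x = c x) →
    ∀ n : ℕ, 1 ≤ n → ∀ x ∈ E, (nuca θ)^[n] e x = (nuca θ)^[n] c x

/-- The NUCA `θ` is sensitive to initial conditions. -/
def Sensitive {A : Type*} (θ : ℤ → ((ℤ → A) → A)) : Prop :=
  ∃ E : Finset ℤ, ∀ c : ℤ → A, ∀ D : Finset ℤ, ∃ e : ℤ → A,
    (∀ x ∈ D, e x = c x) ∧ ∃ n : ℕ, 1 ≤ n ∧ ∃ x ∈ E, (nuca θ)^[n] e x ≠ (nuca θ)^[n] c x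

/-!
Suppose `nuca φ c = nuca φ d` with `c y ≠ d y`. If `c` and `d` agree on some radius-`r` window
left of `y` and on one right of `y`, splicing `d` into `c` between the two windows changes the
image under `nuca φ` nowhere; the finite stretch of `φ` involved occurs in `θ`, so the spliced
pair, translated there, contradicts injectivity of `nuca θ`. Otherwise `c` and `d` disagree near
every point of a half-line. By uniform recurrence, every central pattern of `θ` occurs in `φ`
with bounded gaps, hence at positions on that half-line; translating `c` and `d` there gives
pairs that differ near the origin and have the same image under `nuca θ` on ever larger
intervals, and a pointwise ultrafilter limit of these pairs contradicts injectivity of `nuca θ`.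
-/

theorem Ultrafilter.exists_pointwise_limit {ι κ B : Type*} [Finite B] (U : Ultrafilter ι)
    (c : ι → κ → B) : ∃ c' : κ → B, ∀ s : Finset κ, ∀ᶠ n in U, ∀ i ∈ s, c n i = c' i := by
  choose c' hc' using fun i => (U.map (c · i)).eq_pure_of_finite
  refine ⟨c', fun s => (Filter.eventually_all_finset s).2 fun i _ => ?_⟩
  change {b | b = c' i} ∈ U.map (c · i)
  rw [hc' i]
  exact rfl

section Patterns

variable {R : Type*} {θ φ : ℤ → R}

theorem InOrbitClosure.exists_shift_eqOn_Icc (hφ : InOrbitClosure φ θ) (a b : ℤ) :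
    ∃ k : ℤ, ∀ j : ℤ, a ≤ j + k → j + k ≤ b → θ j = φ (j + k) := by
  obtain ⟨k, hk⟩ := hφ a (b - a + 1).toNat
  refine ⟨-k, fun j h1 h2 => ?_⟩
  have h := hk (j - k - a).toNat (by omega)
  rw [Int.toNat_of_nonneg (by omega)] at h
  convert h.symm using 2 <;> ring

theorem UnifRecurrent.exists_syndetic_shift_eqOn_Icc (hrec : UnifRecurrent θ)
    (hφ : InOrbitClosure φ θ) (n : ℕ) :
    ∃ N : ℕ, ∀ x : ℤ, ∃ t : ℤ, x ≤ t ∧ t ≤ x + N ∧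
      ∀ j : ℤ, -(n : ℤ) ≤ j → j ≤ n → θ j = φ (j + t) := by
  obtain ⟨N, hN⟩ := hrec (-n) (2 * n + 1)
  refine ⟨N, fun x => ?_⟩
  obtain ⟨k, hk⟩ := hφ.exists_shift_eqOn_Icc (x - n) (x + N + n)
  obtain ⟨t, ht1, ht2, ht⟩ := hN (x - k - n)
  refine ⟨t + n + k, by omega, by omega, fun j h1 h2 => ?_⟩
  have hθ := ht (j + n).toNat (by omega)
  rw [Int.toNat_of_nonneg (by omega), show -(n : ℤ) + (j + n) = j by ring] at hθ
  rw [← hθ, hk (t + (j + n)) (by omega) (by omega)]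
  congr 1
  ring

end Patterns

section Nuca

variable {A : Type*} {r : ℕ} {θ φ : ℤ → ((ℤ → A) → A)}

theorem nuca_apply_eq_of_eqOn_window {c d : ℤ → A} {x : ℤ} (hloc : IsLocalRule r (θ x))
    (h : ∀ i, x - r ≤ i → i ≤ x + r → c i = d i) : nuca θ c x = nuca θ d x :=
  hloc _ _ fun i h1 h2 => h (x + i) (by omega) (by omega)

theorem nuca_shift_apply (c : ℤ → A) {x k : ℤ} (h : θ x = φ (x + k)) :
    nuca θ (fun j => c (j + k)) x = nuca φ c (x + k) := by
  simp only [nuca, h, add_right_comm]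

theorem not_injective_nuca_of_forall_eqOn_Icc [Finite A] (hloc : ∀ x, IsLocalRule r (θ x))
    (s : Finset ℤ) (h : ∀ n : ℕ, ∃ c d : ℤ → A, (∃ i ∈ s, c i ≠ d i) ∧
      ∀ x : ℤ, -(n : ℤ) ≤ x → x ≤ n → nuca θ c x = nuca θ d x) :
    ¬ Injective (nuca θ) := by
  choose c d hne heq using h
  set U := Ultrafilter.of (Filter.atTop : Filter ℕ)
  obtain ⟨c', hc'⟩ := U.exists_pointwise_limit c
  obtain ⟨d', hd'⟩ := U.exists_pointwise_limit d
  have hlim : ∀ s, ∀ᶠ n in U, ∀ i ∈ s, c n i = c' i ∧ d n i = d' i := fun s =>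
    ((hc' s).and (hd' s)).mono fun n h i hi => ⟨h.1 i hi, h.2 i hi⟩
  have hlarge : ∀ m : ℕ, ∀ᶠ n in U, m ≤ n := fun m =>
    Ultrafilter.of_le _ (Filter.eventually_ge_atTop m)
  intro hinj
  have himage : nuca θ c' = nuca θ d' := by
    funext x
    obtain ⟨n, hn, hcd⟩ :=
      ((hlarge x.natAbs).and (hlim (Finset.Icc (x - r) (x + r)))).exists
    have hwin : ∀ i, x - r ≤ i → i ≤ x + r → c n i = c' i ∧ d n i = d' i :=
      fun i h1 h2 => hcd i (Finset.mem_Icc.2 ⟨h1, h2⟩)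
    calc nuca θ c' x = nuca θ (c n) x :=
          nuca_apply_eq_of_eqOn_window (hloc x) fun i h1 h2 => (hwin i h1 h2).1.symm
      _ = nuca θ (d n) x := heq n x (by omega) (by omega)
      _ = nuca θ d' x := nuca_apply_eq_of_eqOn_window (hloc x) fun i h1 h2 => (hwin i h1 h2).2
  obtain ⟨n, hn⟩ := (hlim s).exists
  obtain ⟨i, hi, hcd⟩ := hne n
  exact hcd (by rw [(hn i hi).1, (hn i hi).2, hinj himage])

theorem not_injective_nuca_of_disagreement_near_occurrences [Finite A]
    (hloc : ∀ x, IsLocalRule r (θ x)) {c d : ℤ → A} (hcd : nuca φ c = nuca φ d)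
    (h : ∀ n : ℕ, ∃ t : ℤ, (∃ i, t - r ≤ i ∧ i ≤ t + r ∧ c i ≠ d i) ∧
      ∀ j : ℤ, -(n : ℤ) ≤ j → j ≤ n → θ j = φ (j + t)) :
    ¬ Injective (nuca θ) := by
  refine not_injective_nuca_of_forall_eqOn_Icc hloc (Finset.Icc (-r) r) fun n => ?_
  obtain ⟨t, ⟨i, h1, h2, hi⟩, ht⟩ := h n
  refine ⟨fun j => c (j + t), fun j => d (j + t),
    ⟨i - t, Finset.mem_Icc.2 ⟨by omega, by omega⟩, by simpa using hi⟩, fun x h1 h2 => ?_⟩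
  rw [nuca_shift_apply c (ht x h1 h2), nuca_shift_apply d (ht x h1 h2), hcd]

theorem not_injective_nuca_of_splice (hloc : ∀ x, IsLocalRule r (θ x))
    (hφ : InOrbitClosure φ θ) {c d : ℤ → A} (hcd : nuca φ c = nuca φ d) {x₁ y x₂ : ℤ}
    (hx₁ : x₁ ≤ y) (hx₂ : y ≤ x₂) (h₁ : ∀ i, x₁ - r ≤ i → i ≤ x₁ + r → c i = d i)
    (h₂ : ∀ i, x₂ - r ≤ i → i ≤ x₂ + r → c i = d i) (hy : c y ≠ d y) :
    ¬ Injective (nuca θ) := by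
  obtain ⟨k, hk⟩ := hφ.exists_shift_eqOn_Icc x₁ x₂
  set e : ℤ → A := fun j => c (j + k)
  set f : ℤ → A := fun j => if x₁ ≤ j + k ∧ j + k ≤ x₂ then d (j + k) else c (j + k)
  have hfc : ∀ i, (x₁ ≤ i + k → i + k ≤ x₂ → c (i + k) = d (i + k)) → e i = f i := by
    intro i h
    simp only [e, f]
    split_ifs with hi
    exacts [h hi.1 hi.2, rfl]
  have hfd : ∀ i, (i + k < x₁ ∨ x₂ < i + k → c (i + k) = d (i + k)) → f i = d (i + k) := by
    intro i h
    simp only [f]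
    split_ifs with hi
    exacts [rfl, h (by omega)]
  have himage : nuca θ e = nuca θ f := by
    funext x
    by_cases hl : x + k ≤ x₁
    · exact nuca_apply_eq_of_eqOn_window (hloc x) fun i h1 h2 =>
        hfc i fun h3 h4 => h₁ _ (by omega) (by omega)
    by_cases hr : x₂ ≤ x + k
    · exact nuca_apply_eq_of_eqOn_window (hloc x) fun i h1 h2 =>
        hfc i fun h3 h4 => h₂ _ (by omega) (by omega)
    have hrule := hk x (by omega) (by omega)
    calc nuca θ e x = nuca φ c (x + k) := nuca_shift_apply c hrule
      _ = nuca φ d (x + k) := by rw [hcd]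
      _ = nuca θ (fun j => d (j + k)) x := (nuca_shift_apply d hrule).symm
      _ = nuca θ f x := nuca_apply_eq_of_eqOn_window (hloc x) fun i h1 h2 =>
          (hfd i fun h3 => h3.elim (fun _ => h₁ _ (by omega) (by omega))
            (fun _ => h₂ _ (by omega) (by omega))).symm
  intro hinj
  have hey := congrFun (hinj himage) (y - k)
  simp only [e, f, sub_add_cancel, if_pos (And.intro hx₁ hx₂)] at hey
  exact hy hey

end Nuca
theorem stmt_1_general {A : Type*} [Finite A] (r : ℕ) (θ : ℤ → ((ℤ → A) → A))
    (hloc : ∀ x, IsLocalRule r (θ x))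
    (hrec : UnifRecurrent θ) (hinj : Function.Injective (nuca θ)) :
    ∀ φ : ℤ → ((ℤ → A) → A), InOrbitClosure φ θ → Function.Injective (nuca φ) := by
  intro φ hφ c d hcd
  by_contra hne
  obtain ⟨y, hy⟩ := Function.ne_iff.1 hne
  have hsynd := hrec.exists_syndetic_shift_eqOn_Icc hφ
  by_cases hR : ∃ x₂, y ≤ x₂ ∧ ∀ i, x₂ - r ≤ i → i ≤ x₂ + r → c i = d i
  · obtain ⟨x₂, hx₂, h₂⟩ := hR
    by_cases hL : ∃ x₁, x₁ ≤ y ∧ ∀ i, x₁ - r ≤ i → i ≤ x₁ + r → c i = d i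
    · obtain ⟨x₁, hx₁, h₁⟩ := hL
      exact not_injective_nuca_of_splice hloc hφ hcd hx₁ hx₂ h₁ h₂ hy hinj
    push Not at hL
    refine not_injective_nuca_of_disagreement_near_occurrences hloc hcd (fun n => ?_) hinj
    obtain ⟨N, hN⟩ := hsynd n
    obtain ⟨t, -, ht, hpat⟩ := hN (y - N)
    exact ⟨t, hL t (by omega), hpat⟩
  push Not at hR
  refine not_injective_nuca_of_disagreement_near_occurrences hloc hcd (fun n => ?_) hinj
  obtain ⟨N, hN⟩ := hsynd n
  obtain ⟨t, ht, -, hpat⟩ := hN y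
  exact ⟨t, hR t ht, hpat⟩

/-- Stable injectivity: an injective NUCA with a uniformly recurrent rule distribution
(finite rule set of radius-at-most-`r` rules, finite alphabet) has every member of the
orbit closure of its rule distribution also defining an injective NUCA. -/
theorem stmt_1 {A : Type*} [Finite A] (r : ℕ) (θ : ℤ → ((ℤ → A) → A))
    (hfin : (Set.range θ).Finite) (hloc : ∀ x, IsLocalRule r (θ x))
    (hrec : UnifRecurrent θ) (hinj : Function.Injective (nuca θ)) :
    ∀ φ : ℤ → ((ℤ → A) → A), InOrbitClosure φ θ → Function.Injective (nuca φ) :=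
  stmt_1_general r θ hloc hrec hinj
end

section
/- Let θ be a uniformly recurrent rule distribution over a finite rule set such that the non-uniform cellular automaton H_θ : Σ^ℤ → Σ^ℤ is injective. Then H_θ is reversible: there exists a finite rule set R₂ and a rule distribution φ ∈ R₂^ℤ such that H_φ is the two-sided inverse of H_θ. -/
open Function

/-!
Call `H_θ` stably injective of radius `s` when `c x` is determined by `H_θ c` on `[x - s, x + s]`.
If `H_θ` were injective but not stably injective, a compactness argument would give a rule
distribution `ψ` in the orbit closure of `θ` and two distinct configurations with the same
`H_ψ`-image. By uniform recurrence this cannot happen: if the two configurations agree on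
`2r`-collars on both sides of a difference, the finite difference can be cut out and planted into
`θ`; otherwise differences recur with bounded gaps on a half-line, and a second limit, taken around
places where `ψ` looks like ever larger pieces of `θ`, contradicts injectivity of `H_θ`.

Stable injectivity yields at least `|Σ|^M` image patterns on windows of length `M + 2s`. A
Garden-of-Eden pattern recurs with bounded gaps as a non-image, so every window of some fixed length
misses a pattern, which cuts the number of image patterns on long windows by an exponentially small
factor. Hence `H_θ` is surjective, and the inverse rule at `x` reads `c x` off the image on
`[x - s, x + s]`.
-/

open Filter

theorem exists_frequently_eqOn {B : Type*} [Finite B] (F : ℕ → ℤ → B) :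
    ∃ G : ℤ → B, ∀ S : Finset ℤ, ∃ᶠ n in atTop, ∀ y ∈ S, F n y = G y := by
  let U := hyperfilter ℕ
  choose G hG using fun y => (U.map fun n => F n y).eq_pure_of_finite
  refine ⟨G, fun S => ?_⟩
  have hU : ∀ᶠ n in (U : Filter ℕ), ∀ y ∈ S, F n y = G y := by
    refine (eventually_all_finset S).2 fun y _ => ?_
    have : ({G y} : Set B) ∈ U.map fun n => F n y := by
      rw [hG y]
      exact Ultrafilter.mem_pure.2 rfl
    exact Ultrafilter.mem_map.1 this
  exact hU.frequently.filter_mono (hyperfilter_le_cofinite.trans Nat.cofinite_eq_atTop.le)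

section Nuca

variable {A : Type*}

theorem nuca_add_shift (θ : ℤ → ((ℤ → A) → A)) (c : ℤ → A) (t y : ℤ) :
    nuca (fun x => θ (t + x)) (fun x => c (t + x)) y = nuca θ c (t + y) := by
  simp only [nuca, add_assoc]

theorem nuca_apply_eq_of_eqOn {θ θ' : ℤ → ((ℤ → A) → A)} {c c' : ℤ → A} {r : ℕ} {y : ℤ}
    (hloc : IsLocalRule r (θ y)) (hθ : θ y = θ' y)
    (hc : ∀ i, -(r : ℤ) ≤ i → i ≤ r → c (y + i) = c' (y + i)) :
    nuca θ c y = nuca θ' c' y := by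
  rw [nuca, nuca, ← hθ]
  exact hloc _ _ hc

theorem finite_setOf_isLocalRule [Finite A] (r : ℕ) :
    {f : (ℤ → A) → A | IsLocalRule r f}.Finite := by
  rcases isEmpty_or_nonempty A with _ | ⟨⟨a⟩⟩
  · exact Set.toFinite _
  let T := Finset.Icc (-(r : ℤ)) r
  let fill (w : T → A) (i : ℤ) : A := if h : i ∈ T then w ⟨i, h⟩ else a
  refine (Set.finite_range fun (g : (T → A) → A) (u : ℤ → A) => g fun i => u i).subset ?_
  intro f hf
  refine ⟨fun w => f (fill w), funext fun u => hf _ _ fun i h₁ h₂ => ?_⟩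
  simp [fill, T, h₁, h₂]

theorem InOrbitClosure.exists_eqOn {R : Type*} {φ θ : ℤ → R} (h : InOrbitClosure φ θ)
    (a b : ℤ) : ∃ t, ∀ y, a ≤ y → y ≤ b → θ (t + y) = φ y := by
  obtain ⟨k, hk⟩ := h a (b - a + 1).toNat
  refine ⟨k, fun y hay hyb => ?_⟩
  have := hk (y - a).toNat (by omega)
  rw [show a + ((y - a).toNat : ℤ) = y by omega,
    show a + k + ((y - a).toNat : ℤ) = k + y by omega] at this
  exact this.symm

theorem InOrbitClosure.isLocalRule {ψ θ : ℤ → ((ℤ → A) → A)} {r : ℕ}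
    (h : InOrbitClosure ψ θ) (hloc : ∀ x, IsLocalRule r (θ x)) (y : ℤ) :
    IsLocalRule r (ψ y) := by
  obtain ⟨t, ht⟩ := h.exists_eqOn y y
  rw [← ht y le_rfl le_rfl]
  exact hloc _

theorem UnifRecurrent.exists_syndetic_window {R : Type*} {ψ θ : ℤ → R} (hrec : UnifRecurrent θ)
    (hψ : InOrbitClosure ψ θ) (j : ℕ) :
    ∃ n : ℕ, ∀ x : ℤ, ∃ t, x ≤ t ∧ t ≤ x + n ∧
      ∀ y, -(j : ℤ) ≤ y → y ≤ j → ψ (t + y) = θ y := by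
  obtain ⟨n, hn⟩ := hrec (-j) (2 * j + 1)
  refine ⟨n + j, fun x => ?_⟩
  obtain ⟨t₀, ht₀⟩ := hψ.exists_eqOn x (x + n + 2 * j)
  obtain ⟨k, hk₁, hk₂, hk⟩ := hn (t₀ + x)
  refine ⟨k - t₀ + j, by omega, by push_cast; omega, fun y hy₁ hy₂ => ?_⟩
  rw [← ht₀ _ (by omega) (by omega)]
  have := hk (y + j).toNat (by omega)
  rw [show k + ((y + j).toNat : ℤ) = t₀ + (k - t₀ + j + y) by omega,
    show -(j : ℤ) + ((y + j).toNat : ℤ) = y by omega] at this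
  exact this

end Nuca

section StableInjectivity

variable {A : Type*} {r : ℕ} {θ ψ : ℤ → ((ℤ → A) → A)}

def StablyInjective (s : ℕ) (θ : ℤ → ((ℤ → A) → A)) : Prop :=
  ∀ (c d : ℤ → A) (x : ℤ),
    (∀ i, -(s : ℤ) ≤ i → i ≤ s → nuca θ c (x + i) = nuca θ d (x + i)) → c x = d x

theorem exists_limit_of_nuca_eq [Finite A] (ψ : ℕ → ℤ → ((ℤ → A) → A)) (c d : ℕ → ℤ → A)
    (hloc : ∀ n y, IsLocalRule r (ψ n y))
    (him : ∀ n y, y.natAbs ≤ n → nuca (ψ n) (c n) y = nuca (ψ n) (d n) y)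
    {S₀ : Finset ℤ} (hne : ∀ n, ∃ p ∈ S₀, c n p ≠ d n p) :
    ∃ (ψ' : ℤ → ((ℤ → A) → A)) (c' d' : ℤ → A),
      (∀ S : Finset ℤ, ∃ᶠ n in atTop, ∀ y ∈ S, ψ n y = ψ' y) ∧
      nuca ψ' c' = nuca ψ' d' ∧ c' ≠ d' := by
  let R := {f : (ℤ → A) → A | IsLocalRule r f}
  have : Finite R := (finite_setOf_isLocalRule r).to_subtype
  obtain ⟨G, hG⟩ := exists_frequently_eqOn fun n y => ((⟨ψ n y, hloc n y⟩ : R), c n y, d n y)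
  have hG' : ∀ S, ∃ᶠ n in atTop, ∀ y ∈ S,
      ψ n y = (G y).1 ∧ c n y = (G y).2.1 ∧ d n y = (G y).2.2 := fun S =>
    (hG S).mono fun n hn y hy => by simp [← hn y hy]
  refine ⟨fun y => (G y).1, fun y => (G y).2.1, fun y => (G y).2.2,
    fun S => (hG' S).mono fun n hn y hy => (hn y hy).1, funext fun y => ?_, fun h => ?_⟩
  · obtain ⟨n, hn, hS⟩ := (hG' (Finset.Icc (y - r) (y + r))).forall_exists_of_atTop y.natAbs
    have hw : ∀ i, -(r : ℤ) ≤ i → i ≤ r → _ := fun i h₁ h₂ =>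
      hS (y + i) (Finset.mem_Icc.2 ⟨by omega, by omega⟩)
    have hψ : ψ n y = (G y).1 := by simpa using (hw 0 (by omega) (by omega)).1
    calc nuca (fun y => (G y).1) (fun y => (G y).2.1) y = nuca (ψ n) (c n) y :=
          nuca_apply_eq_of_eqOn (G y).1.2 hψ.symm fun i h₁ h₂ => (hw i h₁ h₂).2.1.symm
      _ = nuca (ψ n) (d n) y := him n y hn
      _ = nuca (fun y => (G y).1) (fun y => (G y).2.2) y :=
          nuca_apply_eq_of_eqOn (hloc n y) hψ fun i h₁ h₂ => (hw i h₁ h₂).2.2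
  · obtain ⟨n, hn⟩ := (hG' S₀).exists
    obtain ⟨p, hp, hne⟩ := hne n
    exact hne (by rw [(hn p hp).2.1, (hn p hp).2.2, congrFun h p])

theorem nuca_splice_eq (hloc : ∀ y, IsLocalRule r (ψ y)) {c d : ℤ → A}
    (him : nuca ψ c = nuca ψ d) {z₁ z₂ : ℤ}
    (h₁ : ∀ x, z₁ ≤ x → x < z₁ + 2 * r → c x = d x)
    (h₂ : ∀ x, z₂ ≤ x → x < z₂ + 2 * r → c x = d x) :
    nuca ψ (fun x => if z₁ ≤ x ∧ x < z₂ then d x else c x) = nuca ψ c := by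
  funext y
  by_cases hy : z₁ + r ≤ y ∧ y < z₂ + r
  · rw [him]
    refine hloc y _ _ fun i hi₁ hi₂ => ?_
    dsimp only
    split_ifs with h
    · rfl
    · exact h₂ (y + i) (by omega) (by omega)
  · refine hloc y _ _ fun i hi₁ hi₂ => ?_
    dsimp only
    split_ifs with h
    · exact (h₁ (y + i) (by omega) (by omega)).symm
    · rfl

theorem eq_of_nuca_eq_of_eqOn_compl (hloc : ∀ x, IsLocalRule r (θ x))
    (hinj : Injective (nuca θ)) (hψ : InOrbitClosure ψ θ) {c d : ℤ → A}
    (him : nuca ψ c = nuca ψ d) {a b : ℤ} (hout : ∀ x, x < a ∨ b < x → c x = d x) : c = d := by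
  obtain ⟨t, ht⟩ := hψ.exists_eqOn (a - r) (b + r)
  have key : nuca θ (fun x => c (x - t)) = nuca θ (fun x => d (x - t)) := by
    funext y
    by_cases hy : a - r ≤ y - t ∧ y - t ≤ b + r
    · have hθ : θ y = ψ (y - t) := by rw [← ht _ hy.1 hy.2, add_sub_cancel]
      have hshift : ∀ i, y + i - t = y - t + i := fun i => by ring
      simpa only [nuca, hθ, hshift] using congrFun him (y - t)
    · exact hloc y _ _ fun i _ _ => hout _ (by omega)
  funext x
  simpa using congrFun (hinj key) (x + t)

theorem false_of_dense_differences [Finite A] (hloc : ∀ x, IsLocalRule r (θ x))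
    (hinj : Injective (nuca θ)) (hrec : UnifRecurrent θ) (hψ : InOrbitClosure ψ θ)
    {c d : ℤ → A} (him : nuca ψ c = nuca ψ d) (w : ℕ)
    (hdense : ∀ n : ℕ, ∃ x : ℤ, ∀ t : ℤ, x ≤ t → t ≤ x + n → ∃ y, t ≤ y ∧ y < t + w ∧ c y ≠ d y) :
    False := by
  have hwin : ∀ j : ℕ, ∃ t, (∀ y, -(j : ℤ) ≤ y → y ≤ j → ψ (t + y) = θ y) ∧
      ∃ p ∈ Finset.Ico (0 : ℤ) w, c (t + p) ≠ d (t + p) := by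
    intro j
    obtain ⟨n, hn⟩ := hrec.exists_syndetic_window hψ j
    obtain ⟨x, hx⟩ := hdense n
    obtain ⟨t, h₁, h₂, ht⟩ := hn x
    obtain ⟨y, hy₁, hy₂, hy⟩ := hx t h₁ h₂
    exact ⟨t, ht, y - t, Finset.mem_Ico.2 ⟨by omega, by omega⟩, by rwa [add_sub_cancel]⟩
  choose t ht hdiff using hwin
  obtain ⟨θ', c', d', hθ', him', hne'⟩ := exists_limit_of_nuca_eq (fun j y => ψ (t j + y))
    (fun j y => c (t j + y)) (fun j y => d (t j + y)) (fun j y => hψ.isLocalRule hloc _)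
    (fun j y _ => by rw [nuca_add_shift, nuca_add_shift, him]) hdiff
  have : θ' = θ := funext fun y => by
    obtain ⟨j, hj, hy⟩ := (hθ' {y}).forall_exists_of_atTop y.natAbs
    rw [← hy y (Finset.mem_singleton_self y), ht j y (by omega) (by omega)]
  subst this
  exact hne' (hinj him')

theorem injective_nuca_of_inOrbitClosure [Finite A] (hloc : ∀ x, IsLocalRule r (θ x))
    (hinj : Injective (nuca θ)) (hrec : UnifRecurrent θ) (hψ : InOrbitClosure ψ θ) :
    Injective (nuca ψ) := by
  intro c d him
  by_contra hne
  obtain ⟨p, hp⟩ := Function.ne_iff.1 hne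
  by_cases hR : ∃ z, p < z ∧ ∀ x, z ≤ x → x < z + 2 * r → c x = d x
  · by_cases hL : ∃ z, z + 2 * r ≤ p ∧ ∀ x, z ≤ x → x < z + 2 * r → c x = d x
    · obtain ⟨z₁, hz₁, h₁⟩ := hL
      obtain ⟨z₂, hz₂, h₂⟩ := hR
      have hcut := eq_of_nuca_eq_of_eqOn_compl hloc hinj hψ
        (nuca_splice_eq (hψ.isLocalRule hloc) him h₁ h₂).symm (a := z₁) (b := z₂)
        fun x hx => (if_neg (by omega)).symm
      have := congrFun hcut p
      simp only [show z₁ ≤ p ∧ p < z₂ by omega, and_self, if_true] at this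
      exact hp this
    · push Not at hL
      exact false_of_dense_differences hloc hinj hrec hψ him (2 * r)
        fun n => ⟨p - 2 * r - n, fun t _ h => hL t (by omega)⟩
  · push Not at hR
    exact false_of_dense_differences hloc hinj hrec hψ him (2 * r)
      fun n => ⟨p + 1, fun t h _ => hR t (by omega)⟩

theorem exists_stablyInjective [Finite A] (hloc : ∀ x, IsLocalRule r (θ x))
    (hrec : UnifRecurrent θ) (hinj : Injective (nuca θ)) : ∃ s, StablyInjective s θ := by
  by_contra! h
  simp only [StablyInjective, not_forall] at h
  choose c d x hagree hne using h
  obtain ⟨ψ, c', d', hψ, him, hne'⟩ := exists_limit_of_nuca_eq (fun n y => θ (x n + y))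
    (fun n y => c n (x n + y)) (fun n y => d n (x n + y)) (fun n y => hloc _)
    (fun n y hy => by
      rw [nuca_add_shift, nuca_add_shift]
      exact hagree n y (by omega) (by omega))
    (S₀ := {0}) fun n => ⟨0, Finset.mem_singleton_self 0, by simpa using hne n⟩
  have hψθ : InOrbitClosure ψ θ := fun a m => by
    obtain ⟨n, hn⟩ := (hψ (Finset.Ico a (a + m))).exists
    refine ⟨x n, fun i hi => ?_⟩
    rw [← hn (a + i) (Finset.mem_Ico.2 ⟨by omega, by omega⟩)]
    congr 1
    ring
  exact hne' (injective_nuca_of_inOrbitClosure hloc hinj hrec hψθ him)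

end StableInjectivity

section GardenOfEden

open Finset

variable {A : Type*} [Fintype A] (θ : ℤ → ((ℤ → A) → A))

open Classical in
noncomputable def imagePatterns (z : ℤ) (M : ℕ) : Finset (Fin M → A) :=
  {u | ∃ c : ℤ → A, ∀ i : Fin M, nuca θ c (z + i) = u i}

variable {θ} in
theorem mem_imagePatterns {z : ℤ} {M : ℕ} {u : Fin M → A} :
    u ∈ imagePatterns θ z M ↔ ∃ c : ℤ → A, ∀ i : Fin M, nuca θ c (z + i) = u i := by
  simp [imagePatterns]

theorem card_imagePatterns_le (z : ℤ) (M : ℕ) :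
    #(imagePatterns θ z M) ≤ Fintype.card A ^ M := by
  simpa using Finset.card_le_univ (imagePatterns θ z M)

theorem card_imagePatterns_add_le (z : ℤ) (M N : ℕ) :
    #(imagePatterns θ z (M + N)) ≤ #(imagePatterns θ z M) * #(imagePatterns θ (z + M) N) := by
  rw [← Finset.card_product]
  refine Finset.card_le_card_of_injOn
    (fun u => (fun i => u (Fin.castAdd N i), fun i => u (Fin.natAdd M i))) (fun u hu => ?_)
    fun u _ v _ huv => ?_
  · obtain ⟨c, hc⟩ := mem_imagePatterns.1 hu
    refine Finset.mem_product.2 ⟨mem_imagePatterns.2 ⟨c, fun i => ?_⟩,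
      mem_imagePatterns.2 ⟨c, fun i => ?_⟩⟩
    · simp [← hc]
    · simp [← hc, add_assoc]
  · simp only [Prod.mk.injEq] at huv
    rw [← Fin.append_castAdd_natAdd (f := u), ← Fin.append_castAdd_natAdd (f := v), huv.1, huv.2]

theorem card_imagePatterns_mul_le {L D : ℕ} (hD : ∀ z, #(imagePatterns θ z L) ≤ D) (B : ℕ)
    (z : ℤ) : #(imagePatterns θ z (L * B)) ≤ D ^ B := by
  induction B generalizing z with
  | zero =>
    rw [Nat.mul_zero]
    simpa using card_imagePatterns_le θ z 0
  | succ B ih =>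
    rw [Nat.mul_succ, pow_succ]
    exact (card_imagePatterns_add_le θ z _ L).trans (Nat.mul_le_mul (ih z) (hD _))

theorem imagePatterns_subset_of_eqOn {k z : ℤ} {M : ℕ} (h : ∀ i < M, θ (k + i) = θ (z + i)) :
    imagePatterns θ k M ⊆ imagePatterns θ z M := by
  intro u hu
  obtain ⟨c, hc⟩ := mem_imagePatterns.1 hu
  refine mem_imagePatterns.2 ⟨fun y => c (k - z + y), fun i => ?_⟩
  rw [← hc i, nuca, nuca, ← h i i.2]
  congr 1
  funext j
  congr 1
  ring

theorem card_imagePatterns_le_of_ne_univ {k z : ℤ} {m n : ℕ} (hk : z ≤ k) (hk' : k ≤ z + n)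
    (horph : imagePatterns θ k m ≠ Finset.univ) :
    #(imagePatterns θ z (n + m)) ≤ Fintype.card A ^ n * (Fintype.card A ^ m - 1) := by
  obtain ⟨o, rfl⟩ : ∃ o : ℕ, k = z + o := ⟨(k - z).toNat, by omega⟩
  have ho : o ≤ n := by omega
  have horph' : #(imagePatterns θ (z + o) m) ≤ Fintype.card A ^ m - 1 := by
    have := Finset.card_lt_card (Finset.ssubset_univ_iff.2 horph)
    simp only [Finset.card_univ, Fintype.card_fun, Fintype.card_fin] at this
    omega
  rw [show n + m = o + m + (n - o) by omega]
  calc #(imagePatterns θ z (o + m + (n - o)))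
      ≤ #(imagePatterns θ z o) * #(imagePatterns θ (z + o) m) *
          #(imagePatterns θ (z + (o + m : ℕ)) (n - o)) :=
        (card_imagePatterns_add_le θ z _ _).trans
          (Nat.mul_le_mul_right _ (card_imagePatterns_add_le θ z _ _))
    _ ≤ Fintype.card A ^ o * (Fintype.card A ^ m - 1) * Fintype.card A ^ (n - o) := by
        gcongr
        exacts [card_imagePatterns_le θ _ _, card_imagePatterns_le θ _ _]
    _ = Fintype.card A ^ n * (Fintype.card A ^ m - 1) := by
        rw [mul_right_comm, ← pow_add, Nat.add_sub_cancel' ho]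

theorem pow_le_card_imagePatterns [Nonempty A] {s : ℕ} (hs : StablyInjective s θ) (z : ℤ)
    (M : ℕ) : Fintype.card A ^ M ≤ #(imagePatterns θ z (M + 2 * s)) := by
  let pos : Fin M → ℤ := fun i => z + s + i
  have hpos : Injective pos := fun i j h => Fin.ext (by simpa [pos] using h)
  let cfg (τ : Fin M → A) : ℤ → A := extend pos τ fun _ => Classical.arbitrary A
  have hinj : Injective fun τ (i : Fin (M + 2 * s)) => nuca θ (cfg τ) (z + i) := by
    intro τ₁ τ₂ h
    funext i
    rw [← hpos.extend_apply τ₁ (fun _ => Classical.arbitrary A) i,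
      ← hpos.extend_apply τ₂ (fun _ => Classical.arbitrary A) i]
    refine hs _ _ (pos i) fun j hj₁ hj₂ => ?_
    have := congrFun h ⟨(s + i + j).toNat, by omega⟩
    simp only at this
    rwa [show z + ((s + i + j).toNat : ℤ) = pos i + j by simp only [pos]; omega] at this
  simpa using Finset.card_le_card_of_injOn (s := univ) _
    (fun τ _ => mem_imagePatterns.2 ⟨cfg τ, fun i => rfl⟩) hinj.injOn

theorem exists_pow_mul_lt_pow {a b : ℕ} (hab : a < b) (C : ℕ) : ∃ B, a ^ B * C < b ^ B := by
  have hb : (0 : ℝ) < b := by exact_mod_cast (Nat.zero_le a).trans_lt hab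
  obtain ⟨B, hB⟩ := exists_pow_lt_of_lt_one (show (0 : ℝ) < 1 / (C + 1) by positivity)
    (show (a : ℝ) / b < 1 by rw [div_lt_one hb]; exact_mod_cast hab)
  refine ⟨B, ?_⟩
  rw [div_pow, div_lt_div_iff₀ (by positivity) (by positivity), one_mul] at hB
  have : (a : ℝ) ^ B * C < b ^ B := by nlinarith [pow_nonneg (Nat.cast_nonneg (α := ℝ) a) B]
  exact_mod_cast this

theorem imagePatterns_eq_univ [Nonempty A] (hrec : UnifRecurrent θ) {s : ℕ}
    (hs : StablyInjective s θ) (k : ℤ) (m : ℕ) : imagePatterns θ k m = Finset.univ := by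
  by_contra horph
  set q := Fintype.card A
  have hq : 0 < q := Fintype.card_pos
  obtain ⟨n, hn⟩ := hrec k m
  have hblock : ∀ z, #(imagePatterns θ z (n + m)) ≤ q ^ n * (q ^ m - 1) := fun z => by
    obtain ⟨k', h₁, h₂, hk'⟩ := hn z
    refine card_imagePatterns_le_of_ne_univ θ h₁ h₂ fun h => horph ?_
    exact Finset.eq_univ_of_forall fun u =>
      imagePatterns_subset_of_eqOn θ hk' (h ▸ Finset.mem_univ u)
  obtain ⟨B, hB⟩ := exists_pow_mul_lt_pow (Nat.sub_lt (pow_pos hq m) one_pos) (q ^ (2 * s))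
  have := calc q ^ (n * B) * q ^ (m * B)
      = q ^ ((n + m) * B) := by ring
    _ ≤ #(imagePatterns θ 0 ((n + m) * B + 2 * s)) := pow_le_card_imagePatterns θ hs 0 _
    _ ≤ (q ^ n * (q ^ m - 1)) ^ B * q ^ (2 * s) :=
        (card_imagePatterns_add_le θ 0 _ _).trans
          (Nat.mul_le_mul (card_imagePatterns_mul_le θ hblock B 0) (card_imagePatterns_le θ _ _))
    _ = q ^ (n * B) * ((q ^ m - 1) ^ B * q ^ (2 * s)) := by ring
    _ < q ^ (n * B) * q ^ (m * B) := by
        rw [pow_mul q m B]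
        exact Nat.mul_lt_mul_of_pos_left hB (pow_pos hq _)
  exact lt_irrefl _ this

end GardenOfEden

section Reversibility

variable {A : Type*} [Finite A] {r s : ℕ} {θ : ℤ → ((ℤ → A) → A)}

theorem nuca_surjective (hloc : ∀ x, IsLocalRule r (θ x)) (hrec : UnifRecurrent θ)
    (hs : StablyInjective s θ) : Surjective (nuca θ) := by
  intro e
  have : Nonempty A := ⟨e 0⟩
  have := Fintype.ofFinite A
  have hpre (n : ℕ) : ∃ c : ℤ → A, ∀ y : ℤ, y.natAbs ≤ n → nuca θ c y = e y := by
    obtain ⟨c, hc⟩ := mem_imagePatterns.1 ((imagePatterns_eq_univ θ hrec hs (-n) (2 * n + 1)).symm ▸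
      Finset.mem_univ fun i : Fin (2 * n + 1) => e (-n + i))
    refine ⟨c, fun y hy => ?_⟩
    simpa [Int.toNat_of_nonneg (show 0 ≤ y + n by omega)] using hc ⟨(y + n).toNat, by omega⟩
  choose c hc using hpre
  obtain ⟨G, hG⟩ := exists_frequently_eqOn c
  refine ⟨G, funext fun y => ?_⟩
  obtain ⟨n, hn, hS⟩ := (hG (Finset.Icc (y - r) (y + r))).forall_exists_of_atTop y.natAbs
  rw [← hc n y hn]
  exact nuca_apply_eq_of_eqOn (hloc y) rfl fun i h₁ h₂ =>
    (hS _ (Finset.mem_Icc.2 ⟨by omega, by omega⟩)).symm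

theorem exists_nuca_inverse (hs : StablyInjective s θ) (hsurj : Surjective (nuca θ)) :
    ∃ φ : ℤ → ((ℤ → A) → A), (Set.range φ).Finite ∧ (∀ x, IsLocalRule s (φ x)) ∧
      (∀ c, nuca φ (nuca θ c) = c) ∧ (∀ c, nuca θ (nuca φ c) = c) := by
  classical
  let T := Finset.Icc (-(s : ℤ)) s
  have h0 : (0 : ℤ) ∈ T := by simp [T]
  let g (x : ℤ) (w : T → A) : A :=
    if h : ∃ c, ∀ i : T, nuca θ c (x + i) = w i then h.choose x else w ⟨0, h0⟩
  let φ (x : ℤ) (u : ℤ → A) : A := g x fun i => u i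
  have hleft (c : ℤ → A) : nuca φ (nuca θ c) = c := funext fun x => by
    have h : ∃ c', ∀ i : T, nuca θ c' (x + i) = nuca θ c (x + i) := ⟨c, fun _ => rfl⟩
    exact (dif_pos h).trans (hs _ _ x fun i h₁ h₂ => h.choose_spec ⟨i, Finset.mem_Icc.2 ⟨h₁, h₂⟩⟩)
  refine ⟨φ, (Set.finite_range fun (f : (T → A) → A) (u : ℤ → A) => f fun i => u i).subset
    (by rintro _ ⟨x, rfl⟩; exact ⟨g x, rfl⟩), fun x u v huv => ?_, hleft, fun c => ?_⟩
  · simp only [φ]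
    congr 1
    funext i
    exact huv i (Finset.mem_Icc.1 i.2).1 (Finset.mem_Icc.1 i.2).2
  · obtain ⟨c₀, rfl⟩ := hsurj c
    rw [hleft]

end Reversibility

theorem stmt_2_general {A : Type*} [Finite A] (r : ℕ) (θ : ℤ → ((ℤ → A) → A))
    (hloc : ∀ x, IsLocalRule r (θ x))
    (hrec : UnifRecurrent θ) (hinj : Function.Injective (nuca θ)) :
    ∃ (s : ℕ) (φ : ℤ → ((ℤ → A) → A)), (Set.range φ).Finite ∧
      (∀ x, IsLocalRule s (φ x)) ∧
      (∀ c, nuca φ (nuca θ c) = c) ∧ (∀ c, nuca θ (nuca φ c) = c) := by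
  obtain ⟨s, hs⟩ := exists_stablyInjective hloc hrec hinj
  exact ⟨s, exists_nuca_inverse hs (nuca_surjective hloc hrec hs)⟩

/-- A NUCA with a uniformly recurrent rule distribution over a finite rule set which is
injective is reversible: some NUCA with a finite rule set is its two-sided inverse. -/
theorem stmt_2 {A : Type*} [Finite A] (r : ℕ) (θ : ℤ → ((ℤ → A) → A))
    (hfin : (Set.range θ).Finite) (hloc : ∀ x, IsLocalRule r (θ x))
    (hrec : UnifRecurrent θ) (hinj : Function.Injective (nuca θ)) :
    ∃ (s : ℕ) (φ : ℤ → ((ℤ → A) → A)), (Set.range φ).Finite ∧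
      (∀ x, IsLocalRule s (φ x)) ∧
      (∀ c, nuca φ (nuca θ c) = c) ∧ (∀ c, nuca θ (nuca φ c) = c) :=
  stmt_2_general r θ hloc hrec hinj
end

section
/- There exists a finite alphabet Σ, a finite rule set R, and a recurrent rule distribution θ ∈ R^ℤ such that the non-uniform cellular automaton H_θ is bijective but not reversible (no NUCA with a finite rule set is its inverse). -/
open Function

/-!
The rule distribution uses the identity rule `g` on a sparse set `S ⊆ ℤ` and the rule
`f_R(a, b, c) = b + c` over `ℤ/2` elsewhere. If `S` meets every ray `[x, ∞)`, then
`c x = d x + d (x+1) + ⋯ + d n` for the first `n ≥ x` in `S` recovers `c` from `d = H c`, so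
`H` is bijective; but the inverse reads the whole stretch up to the next cell of `S`.
If `S` misses arbitrarily long intervals, the all-`0` and all-`1` configurations have the same
image around the middle of such an interval, so no inverse of bounded radius exists.
For `S` we take the integers with a base-`5` expansion in the digits `-1, 0, 1`: this set
has arbitrarily long gaps, and shifting by `5^n` preserves it near the origin, which gives
recurrence.
-/

theorem Recurrent.comp {R R' : Type*} {θ : ℤ → R} (h : Recurrent θ) (f : R → R') :
    Recurrent (f ∘ θ) := by
  intro a m
  obtain ⟨k, hk, hθ⟩ := h a m
  exact ⟨k, hk, fun i hi => congrArg f (hθ i hi)⟩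

theorem nuca_eq_of_eqOn {A : Type*} {s : ℕ} {φ : ℤ → ((ℤ → A) → A)}
    (hφ : ∀ x, IsLocalRule s (φ x)) {c c' : ℤ → A} {x : ℤ}
    (h : ∀ y, x - s ≤ y → y ≤ x + s → c y = c' y) : nuca φ c x = nuca φ c' x :=
  hφ x _ _ fun i hi₁ hi₂ => h (x + i) (by omega) (by omega)

inductive HasBalancedDigits : ℕ → ℤ → Prop
  | zero : HasBalancedDigits 0 0
  | succ {n : ℕ} {x : ℤ} (d : ℤ) (hd : |d| ≤ 1) :
      HasBalancedDigits n x → HasBalancedDigits (n + 1) (5 * x + d)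

theorem hasBalancedDigits_zero : ∀ n, HasBalancedDigits n 0
  | 0 => .zero
  | n + 1 => by simpa using HasBalancedDigits.succ 0 (by simp) (hasBalancedDigits_zero n)

namespace HasBalancedDigits

theorem one : HasBalancedDigits 1 1 := by
  simpa using succ 1 le_rfl zero

theorem four_mul_abs_lt {n : ℕ} {x : ℤ} (h : HasBalancedDigits n x) : 4 * |x| < 5 ^ n := by
  induction h with
  | zero => simp
  | @succ n x d hd _ ih =>
    have := abs_add_le (5 * x) d
    rw [abs_mul, abs_of_pos (by norm_num : (0 : ℤ) < 5)] at this
    rw [pow_succ]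
    linarith

theorem add_pow_mul {n m : ℕ} {r y : ℤ} (hr : HasBalancedDigits n r)
    (hy : HasBalancedDigits m y) : HasBalancedDigits (n + m) (r + 5 ^ n * y) := by
  induction hr with
  | zero => simpa using hy
  | @succ n r d hd _ ih =>
    rw [Nat.add_right_comm, show 5 * r + d + 5 ^ (n + 1) * y = 5 * (r + 5 ^ n * y) + d by ring]
    exact succ d hd ih

theorem exists_add_pow_mul {n m : ℕ} {x : ℤ} (h : HasBalancedDigits (n + m) x) :
    ∃ r y, HasBalancedDigits n r ∧ HasBalancedDigits m y ∧ x = r + 5 ^ n * y := by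
  induction n generalizing x with
  | zero => exact ⟨0, x, zero, by simpa using h, by simp⟩
  | succ n ih =>
    rw [Nat.add_right_comm] at h
    cases h with
    | succ d hd hx =>
      obtain ⟨r, y, hr, hy, rfl⟩ := ih hx
      exact ⟨5 * r + d, y, succ d hd hr, hy, by ring⟩

theorem mono {n m : ℕ} {x : ℤ} (h : HasBalancedDigits n x) (hnm : n ≤ m) :
    HasBalancedDigits m x := by
  obtain ⟨k, rfl⟩ := Nat.exists_eq_add_of_le hnm
  simpa using h.add_pow_mul (hasBalancedDigits_zero k)

theorem eq_of_add_pow_mul_eq {n : ℕ} {r b y k : ℤ} (hr : HasBalancedDigits n r)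
    (hb : 4 * |b| < 5 ^ n) (h : b + 5 ^ n * k = r + 5 ^ n * y) : y = k := by
  have hr' := hr.four_mul_abs_lt
  have hdiff : 5 ^ n * (y - k) = b - r := by linarith
  have hsmall : |b - r| < 5 ^ n := by
    rw [abs_lt]
    constructor <;> linarith [le_abs_self b, neg_abs_le b, le_abs_self r, neg_abs_le r]
  rw [← hdiff] at hsmall
  have := Int.eq_zero_of_abs_lt_dvd (dvd_mul_right _ _) hsmall
  simpa [sub_eq_zero] using this

end HasBalancedDigits

def balancedQuinary : Set ℤ := {x | ∃ n, HasBalancedDigits n x}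

namespace balancedQuinary

theorem mem_iff_add_pow_mul (n : ℕ) {x : ℤ} :
    x ∈ balancedQuinary ↔
      ∃ r y, HasBalancedDigits n r ∧ y ∈ balancedQuinary ∧ x = r + 5 ^ n * y := by
  constructor
  · rintro ⟨m, hx⟩
    obtain ⟨r, y, hr, hy, hxy⟩ := (hx.mono (Nat.le_add_left m n)).exists_add_pow_mul
    exact ⟨r, y, hr, ⟨m, hy⟩, hxy⟩
  · rintro ⟨r, y, hr, ⟨m, hy⟩, rfl⟩
    exact ⟨_, hr.add_pow_mul hy⟩

theorem pow_mem (n : ℕ) : (5 : ℤ) ^ n ∈ balancedQuinary :=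
  (mem_iff_add_pow_mul n).2
    ⟨0, 1, hasBalancedDigits_zero n, ⟨1, HasBalancedDigits.one⟩, by ring⟩

theorem notMem_of_le_of_le {n : ℕ} {x : ℤ} (h₁ : 5 ^ n ≤ 4 * x) (h₂ : 4 * x ≤ 3 * 5 ^ n) :
    x ∉ balancedQuinary := by
  rw [mem_iff_add_pow_mul n]
  rintro ⟨r, y, hr, -, rfl⟩
  have hr' := hr.four_mul_abs_lt
  have := le_abs_self r
  have := neg_abs_le r
  rcases le_or_gt y 0 with hy | hy
  · nlinarith [pow_pos (by norm_num : (0 : ℤ) < 5) n]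
  · nlinarith

theorem exists_forall_notMem (L : ℕ) :
    ∃ a : ℤ, ∀ y, a ≤ y → y ≤ a + L → y ∉ balancedQuinary := by
  obtain ⟨n, hn⟩ := pow_unbounded_of_one_lt (L : ℤ) (by norm_num : (1 : ℤ) < 5)
  refine ⟨2 * 5 ^ n, fun y h₁ h₂ => notMem_of_le_of_le (n := n + 1) ?_ ?_⟩ <;>
    rw [pow_succ] <;> omega

theorem add_pow_mem_iff {n : ℕ} {b : ℤ} (hb : 4 * |b| < 5 ^ n) :
    b + 5 ^ n ∈ balancedQuinary ↔ b ∈ balancedQuinary := by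
  rw [mem_iff_add_pow_mul n, mem_iff_add_pow_mul n]
  constructor
  · rintro ⟨r, y, hr, -, h⟩
    obtain rfl := hr.eq_of_add_pow_mul_eq hb (k := 1) (y := y) (by rw [mul_one, h])
    exact ⟨r, 0, hr, ⟨0, .zero⟩, by linarith⟩
  · rintro ⟨r, y, hr, -, h⟩
    obtain rfl := hr.eq_of_add_pow_mul_eq hb (k := 0) (y := y) (by rw [mul_zero, add_zero, ← h])
    exact ⟨r, 1, hr, ⟨1, HasBalancedDigits.one⟩, by rw [h]; ring⟩

theorem recurrent : Recurrent (· ∈ balancedQuinary) := by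
  intro a m
  obtain ⟨n, hn⟩ := pow_unbounded_of_one_lt (4 * (|a| + m)) (by norm_num : (1 : ℤ) < 5)
  refine ⟨5 ^ n, by positivity, fun i hi => ?_⟩
  have hsmall : 4 * |a + i| < 5 ^ n := by
    have := abs_add_le a i
    rw [Nat.abs_cast] at this
    omega
  rw [add_right_comm]
  exact propext (add_pow_mem_iff hsmall)

theorem exists_natCast_add_mem (x : ℤ) : ∃ k : ℕ, x + k ∈ balancedQuinary := by
  obtain ⟨n, hn⟩ := pow_unbounded_of_one_lt x (by norm_num : (1 : ℤ) < 5)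
  exact ⟨(5 ^ n - x).toNat, by rw [Int.toNat_of_nonneg (by omega), add_sub_cancel]; exact pow_mem n⟩

end balancedQuinary

open Classical in
/-- The rule `g` on `S` and `f_R` off `S`. -/
noncomputable def gateRule (S : Set ℤ) : ℤ → ((ℤ → ZMod 2) → ZMod 2) :=
  fun x => if x ∈ S then fun b => b 0 else fun b => b 0 + b 1

namespace gateRule

variable {S : Set ℤ}

open Classical

theorem nuca_of_mem {x : ℤ} (hx : x ∈ S) (c : ℤ → ZMod 2) : nuca (gateRule S) c x = c x := by
  simp [nuca, gateRule, hx]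

theorem nuca_of_notMem {x : ℤ} (hx : x ∉ S) (c : ℤ → ZMod 2) :
    nuca (gateRule S) c x = c x + c (x + 1) := by
  simp [nuca, gateRule, hx]

theorem isLocalRule (S : Set ℤ) (x : ℤ) : IsLocalRule 1 (gateRule S x) := by
  intro u v huv
  have h₀ := huv 0 (by norm_num) (by norm_num)
  have h₁ := huv 1 (by norm_num) (by norm_num)
  by_cases hx : x ∈ S <;> simp [gateRule, hx, h₀, h₁]

theorem finite_range (S : Set ℤ) : (Set.range (gateRule S)).Finite := by
  refine ((Set.finite_singleton fun b : ℤ → ZMod 2 => b 0 + b 1).insert fun b => b 0).subset ?_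
  rintro _ ⟨x, rfl⟩
  by_cases hx : x ∈ S <;> simp [gateRule, hx]

theorem recurrent (h : Recurrent (· ∈ S)) : Recurrent (gateRule S) :=
  h.comp fun p : Prop => if p then fun b : ℤ → ZMod 2 => b 0 else fun b => b 0 + b 1

theorem not_leftInverse_of_gaps (hgap : ∀ L : ℕ, ∃ a : ℤ, ∀ y, a ≤ y → y ≤ a + L → y ∉ S)
    {s : ℕ} {φ : ℤ → ((ℤ → ZMod 2) → ZMod 2)} (hφ : ∀ x, IsLocalRule s (φ x)) :
    ¬ ∀ c, nuca φ (nuca (gateRule S) c) = c := by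
  intro hinv
  obtain ⟨a, ha⟩ := hgap (2 * s)
  have himage : ∀ y, a + s - s ≤ y → y ≤ a + s + s →
      nuca (gateRule S) (fun _ => 1) y = nuca (gateRule S) (fun _ => 0) y := by
    intro y h₁ h₂
    rw [nuca_of_notMem (ha y (by omega) (by push_cast; omega)),
      nuca_of_notMem (ha y (by omega) (by push_cast; omega))]
    decide
  have := nuca_eq_of_eqOn hφ himage
  rw [hinv, hinv] at this
  exact one_ne_zero this

section inverse

variable (hS : ∀ x : ℤ, ∃ k : ℕ, x + k ∈ S)

noncomputable def inv (d : ℤ → ZMod 2) (x : ℤ) : ZMod 2 :=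
  ∑ k ∈ Finset.range (Nat.find (hS x) + 1), d (x + k)

theorem find_eq_zero {x : ℤ} (hx : x ∈ S) : Nat.find (hS x) = 0 :=
  Nat.find_eq_zero _ |>.2 (by simpa using hx)

theorem find_eq_find_add_one {x : ℤ} (hx : x ∉ S) :
    Nat.find (hS x) = Nat.find (hS (x + 1)) + 1 := by
  rw [Nat.find_eq_iff]
  refine ⟨by convert Nat.find_spec (hS (x + 1)) using 1; push_cast; ring, ?_⟩
  rintro (_ | j) hj
  · simpa using hx
  · convert Nat.find_min (hS (x + 1)) (by omega : j < _) using 2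
    push_cast
    ring

theorem inv_of_mem {x : ℤ} (hx : x ∈ S) (d : ℤ → ZMod 2) : inv hS d x = d x := by
  simp [inv, find_eq_zero hS hx]

theorem inv_of_notMem {x : ℤ} (hx : x ∉ S) (d : ℤ → ZMod 2) :
    inv hS d x = d x + inv hS d (x + 1) := by
  rw [inv, find_eq_find_add_one hS hx, Finset.sum_range_succ', add_comm, inv]
  congr 1
  · simp
  · refine Finset.sum_congr rfl fun k _ => ?_
    push_cast
    ring_nf

theorem rightInverse_inv : RightInverse (inv hS) (nuca (gateRule S)) := by
  intro d
  funext x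
  by_cases hx : x ∈ S
  · rw [nuca_of_mem hx, inv_of_mem hS hx]
  · rw [nuca_of_notMem hx, inv_of_notMem hS hx, add_assoc, CharTwo.add_self_eq_zero, add_zero]

theorem leftInverse_inv : LeftInverse (inv hS) (nuca (gateRule S)) := by
  intro c
  funext x
  induction h : Nat.find (hS x) generalizing x with
  | zero =>
    have hx : x ∈ S := by simpa using (Nat.find_eq_zero (hS x)).1 h
    rw [inv_of_mem hS hx, nuca_of_mem hx]
  | succ n ih =>
    have hx : x ∉ S := fun hx => by simp [find_eq_zero hS hx] at h
    rw [inv_of_notMem hS hx, nuca_of_notMem hx,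
      ih (x + 1) (by rw [find_eq_find_add_one hS hx] at h; omega),
      add_assoc, CharTwo.add_self_eq_zero, add_zero]

end inverse

theorem bijective_nuca (hS : ∀ x : ℤ, ∃ k : ℕ, x + k ∈ S) : Bijective (nuca (gateRule S)) :=
  ⟨(leftInverse_inv hS).injective, (rightInverse_inv hS).surjective⟩

end gateRule

/-- There is a finite alphabet, finite rule set and recurrent rule distribution whose
NUCA is bijective but not reversible (no finite-rule-set NUCA is its inverse). -/
theorem stmt_3 :
    ∃ (A : Type) (_ : Fintype A) (r : ℕ) (θ : ℤ → ((ℤ → A) → A)),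
      (Set.range θ).Finite ∧ (∀ x, IsLocalRule r (θ x)) ∧ Recurrent θ ∧
      Function.Bijective (nuca θ) ∧
      ¬ ∃ (s : ℕ) (φ : ℤ → ((ℤ → A) → A)), (Set.range φ).Finite ∧
          (∀ x, IsLocalRule s (φ x)) ∧
          (∀ c, nuca φ (nuca θ c) = c) ∧ (∀ c, nuca θ (nuca φ c) = c) :=
  ⟨ZMod 2, inferInstance, 1, gateRule balancedQuinary, gateRule.finite_range _,
    gateRule.isLocalRule _, gateRule.recurrent balancedQuinary.recurrent,
    gateRule.bijective_nuca balancedQuinary.exists_natCast_add_mem,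
    fun ⟨_, _, _, hφ, hinv, _⟩ =>
      gateRule.not_leftInverse_of_gaps balancedQuinary.exists_forall_notMem hφ hinv⟩
end

section
/- Let Σ = ℤ/2 with radius-1 rules f_R(a,b,c) = b⊕c, f_L(a,b,c) = a⊕b, g(a,b,c) = b, and let θ ∈ {f_L,f_R,g}^ℤ be any distribution in which every cell with rule f_R has, finitely many steps to its right, a cell with rule g with only f_R in between, and symmetrically every f_L cell has a g cell finitely to its left with only f_L in between. Then the NUCA H_θ is injective. -/
/-! A difference between two configurations at an `f_R` cell `x` forces, by right-permutivity
of `f_R`, a difference at `x + 1`, and so on along the run of `f_R` cells up to the `g` cell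
that ends it, where the difference is copied into the image. Symmetrically for `f_L` cells
towards the left, and a difference at a `g` cell is visible directly. -/

open Function

/-- The local rule f_L(a,b,c) = a ⊕ b. -/
def fL : (ℤ → ZMod 2) → ZMod 2 := fun u => u (-1) + u 0

/-- The local rule f_R(a,b,c) = b ⊕ c. -/
def fR : (ℤ → ZMod 2) → ZMod 2 := fun u => u 0 + u 1

/-- The local rule g(a,b,c) = b. -/
def gId : (ℤ → ZMod 2) → ZMod 2 := fun u => u 0

namespace Nuca

variable {θ : ℤ → ((ℤ → ZMod 2) → ZMod 2)} {c d : ℤ → ZMod 2} {x : ℤ}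

lemma apply_of_eq_fR (hx : θ x = fR) : nuca θ c x = c x + c (x + 1) := by
  simp [nuca, hx, fR]

lemma apply_of_eq_fL (hx : θ x = fL) : nuca θ c x = c (x - 1) + c x := by
  simp [nuca, hx, fL, sub_eq_add_neg]

lemma apply_of_eq_gId (hx : θ x = gId) : nuca θ c x = c x := by
  simp [nuca, hx, gId]

section Injectivity

variable (h : nuca θ c = nuca θ d)
include h

lemma eq_of_eq_gId (hx : θ x = gId) : c x = d x := by
  simpa [apply_of_eq_gId hx] using congrFun h x

lemma eq_of_eq_fR (hx : θ x = fR) (hnext : c (x + 1) = d (x + 1)) : c x = d x := by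
  have hx' := congrFun h x
  rw [apply_of_eq_fR hx, apply_of_eq_fR hx, hnext] at hx'
  exact add_right_cancel hx'

lemma eq_of_eq_fL (hx : θ x = fL) (hprev : c (x - 1) = d (x - 1)) : c x = d x := by
  have hx' := congrFun h x
  rw [apply_of_eq_fL hx, apply_of_eq_fL hx, hprev] at hx'
  exact add_left_cancel hx'

lemma eq_of_fR_run_to_gId {k : ℕ} (hg : θ (x + k) = gId) (hrun : ∀ i < k, θ (x + i) = fR) :
    c x = d x := by
  have hagree : ∀ i ≤ k, c (x + i) = d (x + i) := fun i hi =>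
    Nat.decreasingInduction (motive := fun i _ => c (x + i) = d (x + i))
      (fun i hi hsucc => eq_of_eq_fR h (hrun i hi) (by push_cast at hsucc; rwa [add_assoc]))
      (eq_of_eq_gId h hg) hi
  simpa using hagree 0 k.zero_le

lemma eq_of_fL_run_to_gId {k : ℕ} (hg : θ (x - k) = gId) (hrun : ∀ i < k, θ (x - i) = fL) :
    c x = d x := by
  have hagree : ∀ i ≤ k, c (x - i) = d (x - i) := fun i hi =>
    Nat.decreasingInduction (motive := fun i _ => c (x - i) = d (x - i))
      (fun i hi hsucc => eq_of_eq_fL h (hrun i hi) (by push_cast at hsucc; rwa [sub_sub]))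
      (eq_of_eq_gId h hg) hi
  simpa using hagree 0 k.zero_le

end Injectivity

end Nuca

/-- If every f_R cell has a g cell finitely many steps to its right with only f_R in
between, and symmetrically every f_L cell has a g cell finitely to its left with only
f_L in between, then the NUCA is injective. -/
theorem stmt_4 (θ : ℤ → ((ℤ → ZMod 2) → ZMod 2))
    (hrules : ∀ x, θ x = fL ∨ θ x = fR ∨ θ x = gId)
    (hR : ∀ x, θ x = fR → ∃ k : ℕ, 0 < k ∧ θ (x + (k : ℤ)) = gId ∧
      ∀ i : ℕ, i < k → θ (x + (i : ℤ)) = fR)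
    (hL : ∀ x, θ x = fL → ∃ k : ℕ, 0 < k ∧ θ (x - (k : ℤ)) = gId ∧
      ∀ i : ℕ, i < k → θ (x - (i : ℤ)) = fL) :
    Function.Injective (nuca θ) := by
  intro c d h
  funext x
  rcases hrules x with hx | hx | hx
  · obtain ⟨k, -, hg, hrun⟩ := hL x hx
    exact Nuca.eq_of_fL_run_to_gId h hg hrun
  · obtain ⟨k, -, hg, hrun⟩ := hR x hx
    exact Nuca.eq_of_fR_run_to_gId h hg hrun
  · exact Nuca.eq_of_eq_gId h hx
end

section
/- Let θ be a uniformly recurrent rule distribution over a finite rule set R₁, and suppose H_θ is reversible with inverse H_φ for some rule distribution φ over a rule set R₂ containing no two distinct identical rules (rules that compute the same function after padding to a common radius). Then φ is uniformly recurrent. -/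
open Function

/-
A left inverse `H_φ` of `H_θ` reads `φ x` off `H_θ`: since `H_θ` is also surjective, every argument
of `φ x` is the `x`-window of some `H_θ c`, and `H_φ (H_θ c) = c`. If `θ` has the same radius-`s`
pattern around `x` and `y`, shifting `c` by `x - y` turns `x`-windows of `H_θ c` into `y`-windows,
so `φ x` and `φ y` agree as functions. Thus `φ` is a sliding block code of `θ`, and such codes
preserve uniform recurrence.
-/

theorem UnifRecurrent.of_window_determined {R R' : Type*} {θ : ℤ → R} {φ : ℤ → R'} (s : ℕ)
    (hθ : UnifRecurrent θ)
    (hφ : ∀ x y, (∀ j : ℤ, -(s : ℤ) ≤ j → j ≤ s → θ (y + j) = θ (x + j)) → φ y = φ x) :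
    UnifRecurrent φ := by
  intro a m
  obtain ⟨n, hn⟩ := hθ (a - s) (m + 2 * s)
  refine ⟨n, fun x => ?_⟩
  obtain ⟨k, hxk, hkx, hk⟩ := hn (x - s)
  refine ⟨k + s, by omega, by omega, fun i hi => hφ _ _ fun j hj₁ hj₂ => ?_⟩
  obtain ⟨t, ht⟩ : ∃ t : ℕ, (t : ℤ) = i + s + j := ⟨(i + s + j : ℤ).toNat, by omega⟩
  have hkt := hk t (by omega)
  rw [ht] at hkt
  convert hkt using 2 <;> ring

section

variable {A : Type*} {θ φ : ℤ → ((ℤ → A) → A)}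

theorem nuca_translate_apply (c : ℤ → A) {x y j : ℤ} (h : θ (y + j) = θ (x + j)) :
    nuca θ (fun z => c (z + (x - y))) (y + j) = nuca θ c (x + j) := by
  simp only [nuca, h]
  congr 1
  funext i
  congr 1
  ring

theorem rule_eq_of_window_eq {s : ℕ} {x y : ℤ} (hφ : IsLocalRule s (φ y))
    (hφθ : ∀ c, nuca φ (nuca θ c) = c) (hθφ : ∀ c, nuca θ (nuca φ c) = c)
    (h : ∀ j : ℤ, -(s : ℤ) ≤ j → j ≤ s → θ (y + j) = θ (x + j)) :
    φ y = φ x := by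
  funext u
  set c := nuca φ (fun z => u (z - x))
  have hc : nuca θ c = fun z => u (z - x) := hθφ _
  have left_inv (c' : ℤ → A) (z : ℤ) : φ z (fun i => nuca θ c' (z + i)) = c' z :=
    congrFun (hφθ c') z
  calc φ y u = φ y (fun i => nuca θ (fun z => c (z + (x - y))) (y + i)) :=
        hφ _ _ fun i hi₁ hi₂ => by simp [nuca_translate_apply c (h i hi₁ hi₂), hc]
    _ = c x := by rw [left_inv]; simp
    _ = φ x u := by rw [← left_inv c x, hc]; simp

end

/-- Rules are encoded as the functions they compute, so two identical rules are literally equal. -/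
theorem stmt_5_general {A : Type*} (s : ℕ)
    (θ φ : ℤ → ((ℤ → A) → A))
    (hrec : UnifRecurrent θ)
    (hlocφ : ∀ x, IsLocalRule s (φ x))
    (hinv1 : ∀ c, nuca φ (nuca θ c) = c) (hinv2 : ∀ c, nuca θ (nuca φ c) = c) :
    UnifRecurrent φ :=
  hrec.of_window_determined s fun _ y h => rule_eq_of_window_eq (hlocφ y) hinv1 hinv2 h

/-- If a reversible NUCA has a uniformly recurrent rule distribution, then the rule
distribution of its inverse NUCA is also uniformly recurrent. (Rules are encoded as
the functions they compute, so two identical rules are literally equal.) -/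
theorem stmt_5 {A : Type*} [Finite A] (r s : ℕ)
    (θ φ : ℤ → ((ℤ → A) → A))
    (hfinθ : (Set.range θ).Finite) (hlocθ : ∀ x, IsLocalRule r (θ x))
    (hrec : UnifRecurrent θ)
    (hfinφ : (Set.range φ).Finite) (hlocφ : ∀ x, IsLocalRule s (φ x))
    (hinv1 : ∀ c, nuca φ (nuca θ c) = c) (hinv2 : ∀ c, nuca θ (nuca φ c) = c) :
    UnifRecurrent φ :=
  stmt_5_general s θ φ hrec hlocφ hinv1 hinv2
end

section
/- There exists a finite alphabet Σ, a finite rule set, and a rule distribution θ such that the non-uniform cellular automaton H_θ is surjective (and pre-injective) but not balanced. -/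
open Function

/-- The rule f(a,b,c) = a ⊕ b ⊕ c. -/
def fXor : (ℤ → ZMod 2) → ZMod 2 := fun u => u (-1) + u 0 + u 1

/-- The rule g(a,b,c) = max(b,c). -/
def gMax : (ℤ → ZMod 2) → ZMod 2 := fun u => if u 0 = 1 ∨ u 1 = 1 then 1 else 0

/-- The rule distribution with g at the origin and f elsewhere. -/
def θ6 : ℤ → ((ℤ → ZMod 2) → ZMod 2) := fun x => if x = 0 then gMax else fXor

/-! Off the origin `θ6` is the XOR rule, which is permutive in its outer arguments. Hence a
preimage of any configuration can be grown outwards from arbitrary values on the cells `0, 1`,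
and two configurations with the same image that differ on a finite nonempty set cannot exist:
at the outermost cell where they differ, the XOR relation of the neighbouring cell (away from the
origin) forces them to agree. Balance fails at the origin, where the OR rule sends only the two
patterns `(a, 0, 0)` on `[-1, 1]` to `0`, instead of `2 ^ (3 - 1) = 4`. -/

section ThreeTermRecurrence

variable {A : Type*} [AddCommGroup A]

def threeTermRec (a b : A) (e : ℕ → A) : ℕ → A
  | 0 => a
  | 1 => b
  | n + 2 => e n - threeTermRec a b e n - threeTermRec a b e (n + 1)

theorem threeTermRec_add_add (a b : A) (e : ℕ → A) (n : ℕ) :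
    threeTermRec a b e n + threeTermRec a b e (n + 1) + threeTermRec a b e (n + 2) = e n := by
  rw [threeTermRec]
  abel

theorem exists_three_term_sum_eq (d : ℤ → A) (a b : A) :
    ∃ c : ℤ → A, c 0 = a ∧ c 1 = b ∧ ∀ x ≠ 0, c (x - 1) + c x + c (x + 1) = d x := by
  set fwd := threeTermRec a b (fun n => d (n + 1))
  -- `bwd n` is the value at the cell `1 - n`
  set bwd := threeTermRec b a (fun n => d (-n))
  have fwd_add_add (n : ℕ) : fwd n + fwd (n + 1) + fwd (n + 2) = d (n + 1) :=
    threeTermRec_add_add _ _ _ n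
  have bwd_add_add (n : ℕ) : bwd (n + 2) + bwd (n + 1) + bwd n = d (-n) := by
    rw [← threeTermRec_add_add b a (fun n => d (-n)) n]
    abel
  let c : ℤ → A := fun x => if 0 ≤ x then fwd x.toNat else bwd (1 - x).toNat
  have c_natCast (n : ℕ) : c n = fwd n := by simp [c]
  have c_one_sub (n : ℕ) : c (1 - n) = bwd n := by
    match n with
    | 0 => simpa [fwd, bwd, threeTermRec] using c_natCast 1
    | 1 => simpa [fwd, bwd, threeTermRec] using c_natCast 0
    | n + 2 => simp only [c, if_neg (by omega : ¬ (0 : ℤ) ≤ 1 - (n + 2 : ℕ))]; congr; omega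
  refine ⟨c, c_natCast 0, c_natCast 1, fun x hx => ?_⟩
  rcases hx.lt_or_gt with hneg | hpos
  · obtain ⟨n, rfl⟩ : ∃ n : ℕ, x = 1 - (n + 2 : ℕ) := ⟨(-x - 1).toNat, by omega⟩
    have h := bwd_add_add (n + 1)
    rw [← c_one_sub, ← c_one_sub, ← c_one_sub] at h
    convert h using 2 <;> push_cast <;> ring_nf
  · obtain ⟨n, rfl⟩ : ∃ n : ℕ, x = n + 1 := ⟨(x - 1).toNat, by omega⟩
    have h := fwd_add_add n
    rw [← c_natCast, ← c_natCast, ← c_natCast] at h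
    convert h using 2 <;> push_cast <;> ring_nf

theorem eq_zero_of_three_term_sum_eq_zero {δ : ℤ → A} (hδ : (Function.support δ).Finite)
    (hsum : ∀ x ≠ 0, δ (x - 1) + δ x + δ (x + 1) = 0) : δ = 0 := by
  by_contra hne
  have hS : hδ.toFinset.Nonempty := by simpa [Function.support_eq_empty_iff] using hne
  have mem {x : ℤ} : x ∈ hδ.toFinset ↔ δ x ≠ 0 := by simp
  set m := hδ.toFinset.min' hS
  set M := hδ.toFinset.max' hS
  have hm : δ m ≠ 0 := mem.1 (hδ.toFinset.min'_mem hS)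
  have hM : δ M ≠ 0 := mem.1 (hδ.toFinset.max'_mem hS)
  have below {x : ℤ} (hx : x < m) : δ x = 0 := by
    by_contra h; exact absurd (hδ.toFinset.min'_le x (mem.2 h)) (not_le.2 hx)
  have above {x : ℤ} (hx : M < x) : δ x = 0 := by
    by_contra h; exact absurd (hδ.toFinset.le_max' x (mem.2 h)) (not_le.2 hx)
  rcases lt_or_ge m 0 with hm0 | hm0
  · have h := hsum (m - 1) (by omega)
    rw [below (x := m - 1 - 1) (by omega), below (x := m - 1) (by omega), sub_add_cancel,
      zero_add, zero_add] at h
    exact hm h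
  · have hM0 : 0 ≤ M := hm0.trans (hδ.toFinset.min'_le_max' hS)
    have h := hsum (M + 1) (by omega)
    rw [add_sub_cancel_right, above (x := M + 1) (by omega), above (x := M + 1 + 1) (by omega),
      add_zero, add_zero] at h
    exact hM h

end ThreeTermRecurrence

theorem nuca_θ6_of_ne_zero (c : ℤ → ZMod 2) {x : ℤ} (hx : x ≠ 0) :
    nuca θ6 c x = c (x - 1) + c x + c (x + 1) := by
  simp [nuca, θ6, fXor, hx, sub_eq_add_neg]

theorem nuca_θ6_zero (c : ℤ → ZMod 2) :
    nuca θ6 c 0 = if c 0 = 1 ∨ c 1 = 1 then 1 else 0 := by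
  simp [nuca, θ6, gMax]

theorem nuca_θ6_surjective : Surjective (nuca θ6) := by
  intro d
  obtain ⟨c, hc0, hc1, hc⟩ := exists_three_term_sum_eq d (d 0) 0
  refine ⟨c, funext fun x => ?_⟩
  rcases eq_or_ne x 0 with rfl | hx
  · rw [nuca_θ6_zero, hc0, hc1]
    generalize d 0 = v
    revert v
    decide
  · rw [nuca_θ6_of_ne_zero c hx, hc x hx]

theorem nuca_θ6_preinjective {c e : ℤ → ZMod 2} (hfin : {x | c x ≠ e x}.Finite)
    (h : nuca θ6 c = nuca θ6 e) : c = e := by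
  refine sub_eq_zero.1 (eq_zero_of_three_term_sum_eq_zero ?_ fun x hx => ?_)
  · simpa [Function.support, sub_eq_zero] using hfin
  · have hx' := congrFun h x
    rw [nuca_θ6_of_ne_zero _ hx, nuca_θ6_of_ne_zero _ hx] at hx'
    simp only [Pi.sub_apply]
    linear_combination hx'

theorem nbhd_one_singleton_zero : nbhd 1 {0} = Finset.Icc (-1) 1 := by
  simp [nbhd]

abbrev PreimagePattern {A : Type*} (r : ℕ) (θ : ℤ → ((ℤ → A) → A)) (D : Finset ℤ)
    (p : ℤ → A) : Type _ :=
  {q : {y // y ∈ nbhd r D} → A //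
    ∀ c : ℤ → A, (∀ i : {y // y ∈ nbhd r D}, c i.1 = q i) → ∀ x ∈ D, nuca θ c x = p x}

theorem PreimagePattern.apply_eq_zero_of_ne_neg_one
    (q : PreimagePattern 1 θ6 {0} (0 : ℤ → ZMod 2))
    (i : {y // y ∈ nbhd 1 {0}}) (hi : i.1 ≠ -1) : q.1 i = 0 := by
  set c := Function.extend Subtype.val q.1 0
  have hc (j : {y // y ∈ nbhd 1 {0}}) : c j.1 = q.1 j :=
    Subtype.val_injective.extend_apply q.1 0 j
  have h := q.2 c hc 0 (Finset.mem_singleton_self 0)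
  rw [nuca_θ6_zero] at h
  have h01 : c 0 = 0 ∧ c 1 = 0 := by
    revert h
    generalize c 0 = a, c 1 = b
    revert a b
    decide
  have hi' : i.1 = 0 ∨ i.1 = 1 := by
    have := i.2
    simp only [nbhd_one_singleton_zero, Finset.mem_Icc] at this
    omega
  rw [← hc i]
  rcases hi' with hi' | hi' <;> rw [hi']
  exacts [h01.1, h01.2]

theorem not_nucaBalanced_θ6 : ¬ NucaBalanced 1 θ6 := by
  intro hB
  have hm : (-1 : ℤ) ∈ nbhd 1 {0} := by simp [nbhd_one_singleton_zero]
  have hcard : (nbhd 1 {0}).card = 3 := by simp [nbhd_one_singleton_zero]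
  have hle := Nat.card_le_card_of_injective
    (fun q : PreimagePattern 1 θ6 {0} (0 : ℤ → ZMod 2) => q.1 ⟨-1, hm⟩) <| by
    intro q q' hqq'
    ext i : 2
    by_cases hi : i.1 = -1
    · obtain rfl : i = ⟨-1, hm⟩ := Subtype.ext hi
      exact hqq'
    · rw [q.apply_eq_zero_of_ne_neg_one i hi, q'.apply_eq_zero_of_ne_neg_one i hi]
  rw [hB {0} 0, hcard, Finset.card_singleton, Nat.card_eq_fintype_card] at hle
  simp at hle

/-- There is a NUCA (the one above) which is surjective and pre-injective but not
balanced. -/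
theorem stmt_6 :
    Function.Surjective (nuca θ6) ∧
    (∀ c e : ℤ → ZMod 2, {x | c x ≠ e x}.Finite → nuca θ6 c = nuca θ6 e → c = e) ∧
    ¬ NucaBalanced 1 θ6 :=
  ⟨nuca_θ6_surjective, fun _ _ => nuca_θ6_preinjective, not_nucaBalanced_θ6⟩
end

section
/- Let θ ∈ R^ℤ be a recurrent rule distribution (every finite pattern of θ occurs at least twice, equivalently infinitely often) over a finite rule set R of local rules on a finite alphabet Σ with |Σ| = s. If the non-uniform cellular automaton H_θ is surjective, then H_θ is balanced: for every finite domain D ⊆ ℤ and every pattern p ∈ Σ^D, the number of patterns q ∈ Σ^(N_θ(D)) with H_{θ|D}(q) = p equals s^(|N_θ(D)|−|D|). -/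
/-!
Let `c = |Σ|^(|N(D)| - |D|)`. Summing over all patterns on `D` shows that `c` is the average
number of preimages of a pattern on `D`, so it suffices that no pattern has fewer. If `p` had
`d < c` preimages, recurrence yields `m` translates of `D` with pairwise disjoint neighbourhoods on
which `θ` repeats its rules on `D`, and the pattern `P` made of copies of `p` has `d^m` preimages.
Enclosing them in an interval `K`, surjectivity gives each of the `|Σ|^(|K| - m|D|)` patterns on
`K` extending `P` its own preimage on `N(K)`, which forces `c^m ≤ |Σ|^(2r) d^m`, false for large
`m`.
-/

open Function

open Pointwise

section Nbhd

variable {r : ℕ}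

lemma mem_nbhd_of_mem {D : Finset ℤ} {x y : ℤ} (hx : x ∈ D) (h₁ : x - r ≤ y) (h₂ : y ≤ x + r) :
    y ∈ nbhd r D :=
  Finset.mem_biUnion.2 ⟨x, hx, Finset.mem_Icc.2 ⟨h₁, h₂⟩⟩

lemma subset_nbhd {D : Finset ℤ} : D ⊆ nbhd r D :=
  fun _ hx => mem_nbhd_of_mem hx (by omega) (by omega)

lemma nbhd_mono {D D' : Finset ℤ} (h : D ⊆ D') : nbhd r D ⊆ nbhd r D' :=
  Finset.biUnion_subset_biUnion_of_subset_left _ h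

lemma nbhd_union (D₁ D₂ : Finset ℤ) : nbhd r (D₁ ∪ D₂) = nbhd r D₁ ∪ nbhd r D₂ :=
  Finset.union_biUnion

lemma nbhd_vadd (δ : ℤ) (D : Finset ℤ) : nbhd r (δ +ᵥ D) = δ +ᵥ nbhd r D := by
  ext y
  simp only [nbhd, Finset.mem_biUnion, Finset.mem_vadd_finset, Finset.mem_Icc, vadd_eq_add]
  constructor
  · rintro ⟨_, ⟨x, hx, rfl⟩, h₁, h₂⟩
    exact ⟨y - δ, ⟨x, hx, by omega, by omega⟩, by omega⟩
  · rintro ⟨z, ⟨x, hx, h₁, h₂⟩, rfl⟩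
    exact ⟨δ + x, ⟨x, hx, rfl⟩, by omega, by omega⟩

lemma card_nbhd_Icc_le (a b : ℤ) :
    (nbhd r (Finset.Icc a b)).card ≤ (Finset.Icc a b).card + 2 * r := by
  have hsub : nbhd r (Finset.Icc a b) ⊆ Finset.Icc (a - r) (b + r) := by
    intro y hy
    obtain ⟨x, hx, hy⟩ := Finset.mem_biUnion.1 hy
    rw [Finset.mem_Icc] at hx hy ⊢
    omega
  refine (Finset.card_le_card hsub).trans ?_
  rw [Int.card_Icc, Int.card_Icc]
  omega

end Nbhd

section Restrict

variable {ι A : Type*} [DecidableEq ι] [Fintype A] {s t : Finset ι}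

lemma natCard_subtype_restrict₂ (h : s ⊆ t) (P : (s → A) → Prop) :
    Nat.card {q : t → A // P (Finset.restrict₂ (π := fun _ => A) h q)} =
      Nat.card {q : s → A // P q} * Fintype.card A ^ (t.card - s.card) := by
  let e : (t → A) ≃ (s → A) × ((t \ s : Finset ι) → A) :=
    ((Equiv.subtypeEquivRight fun x => by rw [Finset.union_sdiff_of_subset h]).arrowCongr
      (Equiv.refl A)).trans (Equiv.piFinsetUnion (fun _ => A) Finset.disjoint_sdiff).symm
  refine (Nat.card_congr ((e.subtypeEquiv (q := fun w => P w.1) fun _ => Iff.rfl).trans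
    Equiv.prodSubtypeFstEquivSubtypeProd)).trans ?_
  rw [Nat.card_prod, Nat.card_fun, Nat.card_eq_fintype_card (α := A), Nat.card_eq_finsetCard,
    Finset.card_sdiff_of_subset h]

lemma natCard_extensions (h : s ⊆ t) (p : ι → A) :
    Nat.card {v : t → A // ∀ i : t, ↑i ∈ s → v i = p i} = Fintype.card A ^ (t.card - s.card) := by
  have key : ∀ v : t → A,
      (∀ i : t, ↑i ∈ s → v i = p i) ↔ Finset.restrict₂ (π := fun _ => A) h v = s.restrict p :=
    fun v => ⟨fun hv => funext fun i => hv ⟨i, h i.2⟩ i.2,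
      fun hv i hi => congrFun hv ⟨i, hi⟩⟩
  rw [Nat.card_congr (Equiv.subtypeEquivRight key), natCard_subtype_restrict₂ h (· = s.restrict p),
    Nat.card_unique, one_mul]

end Restrict

section Recurrence

variable {R : Type*} {θ : ℤ → R}

theorem Recurrent.exists_shift (hrec : Recurrent θ) (D : Finset ℤ) :
    ∃ k ≠ 0, ∀ y ∈ D, θ (k + y) = θ y := by
  obtain ⟨a, ha⟩ := D.bddBelow
  obtain ⟨b, hb⟩ := D.bddAbove
  obtain ⟨k, hk, hθ⟩ := hrec a (b + 1 - a).toNat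
  refine ⟨k, hk, fun y hy => ?_⟩
  have hay : a ≤ y := ha hy
  have hyb : y ≤ b := hb hy
  have := hθ (y - a).toNat (by omega)
  rwa [Int.toNat_of_nonneg (by omega), show a + k + (y - a) = k + y by ring,
    show a + (y - a) = y by ring] at this

/-- A finite set of such shifts would be invariant under a nonzero translation. -/
theorem Recurrent.infinite_setOf_shift (hrec : Recurrent θ) (D : Finset ℤ) :
    {δ : ℤ | ∀ x ∈ D, θ (δ + x) = θ x}.Infinite := by
  intro hfin
  obtain ⟨k, hk, hθ⟩ := hrec.exists_shift (hfin.toFinset + D)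
  have hmem : ∀ n : ℕ, (n : ℤ) * k ∈ {δ : ℤ | ∀ x ∈ D, θ (δ + x) = θ x} := by
    intro n
    induction n with
    | zero => simp
    | succ n ih =>
      intro x hx
      rw [← ih x hx, ← hθ _ (Finset.add_mem_add (hfin.mem_toFinset.2 ih) hx)]
      congr 1
      push_cast
      ring
  exact Set.infinite_of_injective_forall_mem
    (fun m n h => by exact_mod_cast mul_right_cancel₀ hk h) hmem hfin

theorem Recurrent.exists_shift_disjoint (hrec : Recurrent θ) (D S F : Finset ℤ) :
    ∃ δ : ℤ, (∀ x ∈ D, θ (δ + x) = θ x) ∧ Disjoint (δ +ᵥ S) F := by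
  obtain ⟨δ, hδ, hδF⟩ := (hrec.infinite_setOf_shift D).exists_notMem_finset (F - S)
  refine ⟨δ, hδ, Finset.disjoint_left.2 fun y hy hyF => hδF ?_⟩
  obtain ⟨x, hx, rfl⟩ := Finset.mem_vadd_finset.1 hy
  exact Finset.mem_sub.2 ⟨_, hyF, x, hx, by simp⟩

end Recurrence

lemma exists_mul_pow_lt_pow (B : ℕ) {a b : ℕ} (hab : a < b) : ∃ m : ℕ, B * a ^ m < b ^ m := by
  have hb : (0 : ℚ) < b := by exact_mod_cast (Nat.zero_le a).trans_lt hab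
  obtain ⟨m, hm⟩ := exists_pow_lt_of_lt_one (show (0 : ℚ) < 1 / (B + 1) by positivity)
    (show (a : ℚ) / b < 1 by rw [div_lt_one hb]; exact_mod_cast hab)
  refine ⟨m, ?_⟩
  rw [div_pow, div_lt_div_iff₀ (by positivity) (by positivity), one_mul] at hm
  have : (B * a ^ m : ℚ) < b ^ m := by nlinarith [pow_nonneg (Nat.cast_nonneg (α := ℚ) a) m]
  exact_mod_cast this

section Counting

variable {A : Type*} {r : ℕ} {θ : ℤ → ((ℤ → A) → A)}

lemma nuca_eqOn (hloc : ∀ x, IsLocalRule r (θ x)) {c c' : ℤ → A} {D : Finset ℤ}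
    (h : Set.EqOn c c' (nbhd r D)) : Set.EqOn (nuca θ c) (nuca θ c') D :=
  fun x hx => hloc x _ _ fun i h₁ h₂ => h (mem_nbhd_of_mem hx (by omega) (by omega))

variable [Nonempty A]

noncomputable def extendPattern (E : Finset ℤ) (q : E → A) : ℤ → A :=
  fun y => if h : y ∈ E then q ⟨y, h⟩ else Classical.arbitrary A

lemma extendPattern_of_mem {E : Finset ℤ} (q : E → A) {y : ℤ} (h : y ∈ E) :
    extendPattern E q y = q ⟨y, h⟩ :=
  dif_pos h

@[simp]
lemma extendPattern_coe {E : Finset ℤ} (q : E → A) (i : E) : extendPattern E q i = q i :=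
  extendPattern_of_mem q i.2

lemma extendPattern_restrict_eqOn (E : Finset ℤ) (c : ℤ → A) :
    Set.EqOn (extendPattern E (E.restrict c)) c E :=
  fun _ hy => extendPattern_of_mem _ hy

lemma extendPattern_restrict₂_eqOn {E F : Finset ℤ} (h : E ⊆ F) (q : F → A) :
    Set.EqOn (extendPattern E (Finset.restrict₂ (π := fun _ => A) h q)) (extendPattern F q) E :=
  fun _ hy => by rw [extendPattern_of_mem _ hy, extendPattern_of_mem _ (h hy)]; rfl

lemma nuca_extendPattern_restrict₂ (hloc : ∀ x, IsLocalRule r (θ x)) {D E F : Finset ℤ}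
    (hD : nbhd r D ⊆ E) (hEF : E ⊆ F) (q : F → A) :
    Set.EqOn (nuca θ (extendPattern E (Finset.restrict₂ (π := fun _ => A) hEF q)))
      (nuca θ (extendPattern F q)) D :=
  nuca_eqOn hloc ((extendPattern_restrict₂_eqOn hEF q).mono hD)

/-- For `E = nbhd r D` this is the number of preimages of `p|D` under the finite-domain map
`H_{θ|D}`. -/
noncomputable def preimageCount (θ : ℤ → ((ℤ → A) → A)) (E D : Finset ℤ) (p : ℤ → A) : ℕ :=
  Nat.card {q : E → A // ∀ x ∈ D, nuca θ (extendPattern E q) x = p x}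

lemma natCard_forcing_eq_preimageCount (hloc : ∀ x, IsLocalRule r (θ x)) (D : Finset ℤ)
    (p : ℤ → A) :
    Nat.card {q : nbhd r D → A // ∀ c : ℤ → A, (∀ i : nbhd r D, c i = q i) →
      ∀ x ∈ D, nuca θ c x = p x} = preimageCount θ (nbhd r D) D p :=
  Nat.card_congr <| Equiv.subtypeEquivRight fun q =>
    ⟨fun h => h _ (extendPattern_coe q), fun h c hc x hx =>
      (nuca_eqOn hloc (fun y hy => by rw [hc ⟨y, hy⟩, extendPattern_coe q ⟨y, hy⟩]) hx).trans
        (h x hx)⟩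

lemma preimageCount_congr {θ' : ℤ → ((ℤ → A) → A)} {E D : Finset ℤ} {p p' : ℤ → A}
    (hθ : ∀ x ∈ D, θ x = θ' x) (hp : ∀ x ∈ D, p x = p' x) :
    preimageCount θ E D p = preimageCount θ' E D p' :=
  Nat.card_congr <| Equiv.subtypeEquivRight fun _ =>
    forall₂_congr fun x hx => by simp only [nuca, hθ x hx, hp x hx]

lemma preimageCount_vadd (δ : ℤ) (E D : Finset ℤ) (p : ℤ → A) :
    preimageCount θ (δ +ᵥ E) (δ +ᵥ D) p =
      preimageCount (fun x => θ (δ + x)) E D (fun x => p (δ + x)) := by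
  let e : E ≃ (δ +ᵥ E : Finset ℤ) :=
    (Equiv.addLeft δ).subtypeEquiv fun _ => (Finset.vadd_mem_vadd_finset_iff δ).symm
  have hext : ∀ (q : (δ +ᵥ E : Finset ℤ) → A) (y : ℤ),
      extendPattern (δ +ᵥ E) q (δ + y) = extendPattern E (q ∘ e) y := by
    intro q y
    have hmem : δ + y ∈ δ +ᵥ E ↔ y ∈ E := Finset.vadd_mem_vadd_finset_iff δ
    by_cases hy : y ∈ E
    · rw [extendPattern_of_mem _ hy, extendPattern_of_mem _ (hmem.2 hy)]
      rfl
    · rw [extendPattern, extendPattern, dif_neg hy, dif_neg (mt hmem.1 hy)]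
  refine Nat.card_congr ((e.arrowCongr (Equiv.refl A)).symm.subtypeEquiv fun q => ?_)
  simp only [Finset.mem_vadd_finset, vadd_eq_add, forall_exists_index, and_imp,
    forall_apply_eq_imp_iff₂, nuca, add_assoc, hext]
  rfl

lemma preimageCount_union (hloc : ∀ x, IsLocalRule r (θ x)) {D₁ D₂ E₁ E₂ : Finset ℤ}
    (h₁ : nbhd r D₁ ⊆ E₁) (h₂ : nbhd r D₂ ⊆ E₂) (hE : Disjoint E₁ E₂) (p : ℤ → A) :
    preimageCount θ (E₁ ∪ E₂) (D₁ ∪ D₂) p = preimageCount θ E₁ D₁ p * preimageCount θ E₂ D₂ p := by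
  let e := (Equiv.piFinsetUnion (fun _ => A) hE).symm
  have key : ∀ q : (E₁ ∪ E₂ : Finset ℤ) → A,
      (∀ x ∈ D₁ ∪ D₂, nuca θ (extendPattern _ q) x = p x) ↔
        (∀ x ∈ D₁, nuca θ (extendPattern E₁ (e q).1) x = p x) ∧
          ∀ x ∈ D₂, nuca θ (extendPattern E₂ (e q).2) x = p x := by
    intro q
    rw [Finset.forall_mem_union]
    refine and_congr (forall₂_congr fun x hx => ?_) (forall₂_congr fun x hx => ?_)
    · rw [← nuca_extendPattern_restrict₂ hloc h₁ Finset.subset_union_left q hx]; rfl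
    · rw [← nuca_extendPattern_restrict₂ hloc h₂ Finset.subset_union_right q hx]; rfl
  exact (Nat.card_congr ((e.subtypeEquiv key).trans Equiv.subtypeProdEquivProd)).trans
    (Nat.card_prod _ _)

/-- `m` far-apart copies of `(D, p)`, placed where recurrence repeats the rules of `θ` on `D`. -/
lemma exists_preimageCount_eq_pow (hloc : ∀ x, IsLocalRule r (θ x)) (hrec : Recurrent θ)
    (D : Finset ℤ) (p : ℤ → A) (m : ℕ) :
    ∃ (D' : Finset ℤ) (P : ℤ → A),
      preimageCount θ (nbhd r D') D' P = preimageCount θ (nbhd r D) D p ^ m ∧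
        D'.card = m * D.card ∧ (nbhd r D').card = m * (nbhd r D).card := by
  induction m with
  | zero => exact ⟨∅, p, by simp [preimageCount, nbhd], by simp, by simp [nbhd]⟩
  | succ m ih =>
    obtain ⟨D', P, hcount, hcard, hncard⟩ := ih
    obtain ⟨δ, hθ, hdisj⟩ := hrec.exists_shift_disjoint D (nbhd r D) (nbhd r D')
    have hD : Disjoint D' (δ +ᵥ D) := hdisj.symm.mono subset_nbhd
      (by rw [← nbhd_vadd]; exact subset_nbhd)
    refine ⟨D' ∪ (δ +ᵥ D), fun x => if x ∈ D' then P x else p (x - δ), ?_, ?_, ?_⟩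
    · rw [nbhd_union, nbhd_vadd,
        preimageCount_union hloc subset_rfl (nbhd_vadd δ D).subset hdisj.symm,
        preimageCount_vadd, pow_succ, ← hcount]
      congr 1
      · exact preimageCount_congr (fun _ _ => rfl) fun x hx => if_pos hx
      · refine preimageCount_congr hθ fun x hx => ?_
        have hx' : δ + x ∉ D' := Finset.disjoint_right.1 hD (Finset.vadd_mem_vadd_finset hx)
        rw [if_neg hx', add_sub_cancel_left]
    · rw [Finset.card_union_of_disjoint hD, Finset.card_vadd_finset, hcard, add_one_mul]
    · rw [nbhd_union, nbhd_vadd, Finset.card_union_of_disjoint hdisj.symm, Finset.card_vadd_finset,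
        hncard, add_one_mul]

variable [Fintype A]

lemma preimageCount_eq_mul (hloc : ∀ x, IsLocalRule r (θ x)) {D E F : Finset ℤ}
    (hD : nbhd r D ⊆ E) (hEF : E ⊆ F) (p : ℤ → A) :
    preimageCount θ F D p = preimageCount θ E D p * Fintype.card A ^ (F.card - E.card) := by
  rw [preimageCount, preimageCount, ← natCard_subtype_restrict₂ hEF]
  exact Nat.card_congr <| Equiv.subtypeEquivRight fun q => forall₂_congr fun x hx => by
    rw [nuca_extendPattern_restrict₂ hloc hD hEF q hx]

/-- Every pattern on `K` has a preimage, and distinct patterns on `K` have distinct preimages. -/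
lemma pow_le_preimageCount_of_subset (hloc : ∀ x, IsLocalRule r (θ x))
    (hsurj : Surjective (nuca θ)) {D K E : Finset ℤ} (hDK : D ⊆ K) (hKE : nbhd r K ⊆ E)
    (p : ℤ → A) : Fintype.card A ^ (K.card - D.card) ≤ preimageCount θ E D p := by
  choose c hc using fun v : K → A => hsurj (extendPattern K v)
  have himage : ∀ v : K → A, ∀ x : K, nuca θ (extendPattern E (E.restrict (c v))) x = v x :=
    fun v x => by
      rw [nuca_eqOn hloc ((extendPattern_restrict_eqOn E (c v)).mono hKE) x.2, hc,
        extendPattern_coe]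
  rw [← natCard_extensions hDK p]
  refine Nat.card_le_card_of_injective
    (fun v => ⟨E.restrict (c v.1), fun x hx => (himage _ ⟨x, hDK hx⟩).trans (v.2 _ hx)⟩)
    fun v w hvw => Subtype.ext <| funext fun x => ?_
  rw [← himage v x, ← himage w x]
  exact congrArg (fun q => nuca θ (extendPattern E q) x) (congrArg Subtype.val hvw)

lemma sum_preimageCount_extendPattern (E K : Finset ℤ) :
    ∑ v : K → A, preimageCount θ E K (extendPattern K v) = Fintype.card A ^ E.card := by
  classical
  let image : (E → A) → K → A := fun q x => nuca θ (extendPattern E q) x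
  have hfiber : ∀ v : K → A, preimageCount θ E K (extendPattern K v) =
      (Finset.univ.filter fun q => image q = v).card := by
    intro v
    rw [preimageCount, Nat.card_eq_fintype_card, Fintype.card_subtype]
    congr 1
    refine Finset.filter_congr fun q _ => ⟨fun h => funext fun x => ?_, fun h x hx => ?_⟩
    · exact (h x x.2).trans (extendPattern_coe v x)
    · rw [← h, extendPattern_of_mem _ hx]
  rw [Finset.sum_congr rfl fun v _ => hfiber v, ← Finset.card_eq_sum_card_fiberwise
    (fun _ _ => Finset.mem_univ _), Finset.card_univ, Fintype.card_fun, Fintype.card_coe]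

/-- The bound is the average number of preimages, by `sum_preimageCount_extendPattern`. -/
lemma preimageCount_eq_of_forall_le {D E : Finset ℤ} (hDE : D ⊆ E)
    (hle : ∀ p : ℤ → A, Fintype.card A ^ (E.card - D.card) ≤ preimageCount θ E D p)
    (p : ℤ → A) : preimageCount θ E D p = Fintype.card A ^ (E.card - D.card) := by
  have hsum : ∑ _v : D → A, Fintype.card A ^ (E.card - D.card) =
      ∑ v : D → A, preimageCount θ E D (extendPattern D v) := by
    rw [sum_preimageCount_extendPattern, Finset.sum_const, Finset.card_univ, Fintype.card_fun,
      Fintype.card_coe, smul_eq_mul, ← pow_add, Nat.add_sub_cancel' (Finset.card_le_card hDE)]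
  rw [preimageCount_congr (fun _ _ => rfl) (extendPattern_restrict_eqOn D p).symm]
  exact ((Finset.sum_eq_sum_iff_of_le fun v _ => hle _).1 hsum _ (Finset.mem_univ _)).symm

theorem pow_le_preimageCount (hloc : ∀ x, IsLocalRule r (θ x)) (hrec : Recurrent θ)
    (hsurj : Surjective (nuca θ)) (D : Finset ℤ) (p : ℤ → A) :
    Fintype.card A ^ ((nbhd r D).card - D.card) ≤ preimageCount θ (nbhd r D) D p := by
  set s := Fintype.card A
  set d := preimageCount θ (nbhd r D) D p
  by_contra! hlt
  obtain ⟨m, hm⟩ := exists_mul_pow_lt_pow (s ^ (2 * r)) hlt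
  obtain ⟨D', P, hcount, hcard, hncard⟩ := exists_preimageCount_eq_pow hloc hrec D p m
  obtain ⟨a, ha⟩ := D'.bddBelow
  obtain ⟨b, hb⟩ := D'.bddAbove
  set K := Finset.Icc a b
  have hD'K : D' ⊆ K := fun x hx => Finset.mem_Icc.2 ⟨ha hx, hb hx⟩
  have hlow := pow_le_preimageCount_of_subset hloc hsurj hD'K subset_rfl P
  rw [preimageCount_eq_mul hloc subset_rfl (nbhd_mono hD'K), hcount] at hlow
  have hs : 0 < s := Fintype.card_pos
  have hmD : m * D.card ≤ K.card := hcard ▸ Finset.card_le_card hD'K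
  have hmN : m * (nbhd r D).card ≤ (nbhd r K).card :=
    hncard ▸ Finset.card_le_card (nbhd_mono hD'K)
  have hDN : m * D.card ≤ m * (nbhd r D).card :=
    Nat.mul_le_mul_left m (Finset.card_le_card subset_nbhd)
  have hexp : ((nbhd r D).card - D.card) * m = m * (nbhd r D).card - m * D.card := by
    rw [Nat.sub_mul, mul_comm, mul_comm D.card]
  have key : s ^ K.card * (s ^ ((nbhd r D).card - D.card)) ^ m ≤
      s ^ K.card * (s ^ (2 * r) * d ^ m) :=
    calc s ^ K.card * (s ^ ((nbhd r D).card - D.card)) ^ m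
        = s ^ (K.card - D'.card) * s ^ (m * (nbhd r D).card) := by
          rw [← pow_mul, ← pow_add, ← pow_add, hcard]; congr 1; omega
      _ ≤ d ^ m * s ^ ((nbhd r K).card - (nbhd r D').card) * s ^ (m * (nbhd r D).card) :=
          Nat.mul_le_mul_right _ hlow
      _ = d ^ m * s ^ (nbhd r K).card := by
          rw [mul_assoc, ← pow_add, hncard, Nat.sub_add_cancel hmN]
      _ ≤ d ^ m * s ^ (K.card + 2 * r) :=
          Nat.mul_le_mul_left _ (Nat.pow_le_pow_right hs (card_nbhd_Icc_le a b))
      _ = s ^ K.card * (s ^ (2 * r) * d ^ m) := by ring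
  exact (Nat.le_of_mul_le_mul_left key (pow_pos hs _)).not_gt hm

end Counting

theorem stmt_7_general {A : Type*} [Fintype A] (r : ℕ) (θ : ℤ → ((ℤ → A) → A))
    (hloc : ∀ x, IsLocalRule r (θ x))
    (hrec : Recurrent θ) (hsurj : Function.Surjective (nuca θ)) :
    NucaBalanced r θ := by
  intro D p
  have : Nonempty A := ⟨p 0⟩
  rw [natCard_forcing_eq_preimageCount hloc]
  exact preimageCount_eq_of_forall_le subset_nbhd (pow_le_preimageCount hloc hrec hsurj D) p

/-- A surjective NUCA with a recurrent rule distribution over a finite rule set of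
radius-`r` rules on a finite alphabet is balanced. -/
theorem stmt_7 {A : Type*} [Fintype A] (r : ℕ) (θ : ℤ → ((ℤ → A) → A))
    (hfin : (Set.range θ).Finite) (hloc : ∀ x, IsLocalRule r (θ x))
    (hrec : Recurrent θ) (hsurj : Function.Surjective (nuca θ)) :
    NucaBalanced r θ :=
  stmt_7_general r θ hloc hrec hsurj
end

section
/- There exists a radius-1 non-uniform cellular automaton H_θ on alphabet {0,1} over ℤ whose set of equicontinuity points E satisfies: E is nonempty and E is not residual (indeed not dense) in {0,1}^ℤ. -/
open Function

/-- The leftward traffic rule τ (with 1 = true, 0 = false). -/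
def tau : (ℤ → Bool) → Bool := fun u =>
  if u (-1) = false ∧ u 0 = true then false
  else if u 0 = false ∧ u 1 = true then true
  else u 0

/-- The identity rule. -/
def idRule : (ℤ → Bool) → Bool := fun u => u 0

/-- Traffic on the positive cells, identity on the nonpositive cells. -/
def θtraffic : ℤ → ((ℤ → Bool) → Bool) := fun x => if 0 < x then tau else idRule

/-! Cells `x ≤ 0` are frozen and cars (ones) on the positive cells drive leftwards, moving
whenever the cell to their left is empty. A frozen car at `0` blocks the road: a block of cars
on `[0, M]` never moves, so `fun _ => true` is an equicontinuity point. A frozen empty cell at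
`0` is a sink: a car reaching cell `1` disappears next step. Then cell `1` is sensitive to cells
arbitrarily far to the right: finitely many cars all get absorbed (the sum of their positions
drops at every step, since the leftmost car moves), whereas an infinite jam beyond any window
keeps supplying cars to cell `1`. So no configuration with `c 0 = false` is an equicontinuity
point, and these form a nonempty open set. -/

theorem iterate_nuca_apply_eq_of_eqOn {A : Type*} {r : ℕ} {θ : ℤ → (ℤ → A) → A}
    (hθ : ∀ x, IsLocalRule r (θ x)) {d d' : ℤ → A} (t : ℕ) (y : ℤ)
    (h : Set.EqOn d d' (Set.Icc (y - r * t) (y + r * t))) :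
    (nuca θ)^[t] d y = (nuca θ)^[t] d' y := by
  induction t generalizing y with
  | zero => exact h (by simp)
  | succ t ih =>
    rw [Function.iterate_succ_apply', Function.iterate_succ_apply']
    refine hθ y _ _ fun i hi₁ hi₂ => ih (y + i) fun z ⟨hz₁, hz₂⟩ => h ⟨?_, ?_⟩ <;>
      push_cast [mul_add] at * <;> omega

theorem isLocalRule_tau : IsLocalRule 1 tau := by
  intro u v h
  simp only [tau, h (-1) (by norm_num) (by norm_num), h 0 (by norm_num) (by norm_num),
    h 1 (by norm_num) (by norm_num)]

theorem isLocalRule_idRule : IsLocalRule 1 idRule :=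
  fun _ _ h => h 0 (by norm_num) (by norm_num)

namespace θtraffic

theorem isLocalRule (x : ℤ) : IsLocalRule 1 (θtraffic x) := by
  unfold θtraffic
  split_ifs
  exacts [isLocalRule_tau, isLocalRule_idRule]

theorem finite_range : (Set.range θtraffic).Finite := by
  refine (Set.toFinite {tau, idRule}).subset ?_
  rintro _ ⟨x, rfl⟩
  unfold θtraffic
  split_ifs <;> simp

theorem nuca_apply_of_nonpos (d : ℤ → Bool) {x : ℤ} (hx : x ≤ 0) : nuca θtraffic d x = d x := by
  simp [nuca, θtraffic, idRule, not_lt.mpr hx]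

theorem nuca_apply_of_pos (d : ℤ → Bool) {x : ℤ} (hx : 0 < x) :
    nuca θtraffic d x = (d (x - 1) && d x || !d x && d (x + 1)) := by
  simp only [nuca, θtraffic, if_pos hx, tau, add_zero, ← sub_eq_add_neg]
  cases d (x - 1) <;> cases d x <;> cases d (x + 1) <;> rfl

theorem iterate_nuca_apply_of_nonpos (d : ℤ → Bool) (t : ℕ) {x : ℤ} (hx : x ≤ 0) :
    (nuca θtraffic)^[t] d x = d x := by
  induction t with
  | zero => rfl
  | succ t ih => rw [Function.iterate_succ_apply', nuca_apply_of_nonpos _ hx, ih]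

theorem nuca_const_true : nuca θtraffic (fun _ => true) = fun _ => true := by
  funext x
  rcases le_or_gt x 0 with hx | hx
  · exact nuca_apply_of_nonpos _ hx
  · simp [nuca_apply_of_pos _ hx]

theorem iterate_nuca_apply_eq_true_of_Icc {d : ℤ → Bool} {M : ℤ}
    (h : ∀ x, 0 ≤ x → x ≤ M → d x = true) (t : ℕ) :
    ∀ x, 0 ≤ x → x ≤ M → (nuca θtraffic)^[t] d x = true := by
  induction t with
  | zero => exact h
  | succ t ih =>
    intro x hx₀ hxM
    rw [Function.iterate_succ_apply']
    rcases hx₀.eq_or_lt with rfl | hx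
    · rw [nuca_apply_of_nonpos _ le_rfl, ih 0 le_rfl hxM]
    · rw [nuca_apply_of_pos _ hx, ih (x - 1) (by omega) (by omega), ih x hx₀ hxM]
      rfl

theorem eqPt_const_true : EqPt θtraffic fun _ => true := by
  intro E
  obtain ⟨M, hM⟩ := E.bddAbove
  refine ⟨E ∪ Finset.Icc 0 M, fun e he n _ x hx => ?_⟩
  rw [Function.iterate_fixed nuca_const_true]
  rcases le_or_gt x 0 with hx₀ | hx₀
  · rw [iterate_nuca_apply_of_nonpos _ _ hx₀]
    exact he x (Finset.mem_union_left _ hx)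
  · refine iterate_nuca_apply_eq_true_of_Icc (fun z hz₀ hzM => he z ?_) n x hx₀.le (hM hx)
    exact Finset.mem_union_right _ (Finset.mem_Icc.mpr ⟨hz₀, hzM⟩)

theorem iterate_nuca_apply_eq_false_of_pos {d : ℤ → Bool} (h : ∀ x, 0 < x → d x = false)
    (t : ℕ) : ∀ x, 0 < x → (nuca θtraffic)^[t] d x = false := by
  induction t with
  | zero => exact h
  | succ t ih =>
    intro x hx
    rw [Function.iterate_succ_apply', nuca_apply_of_pos _ hx, ih x hx, ih (x + 1) (by omega)]
    simp

/-- Follow the leftmost car: its left neighbour is always empty. -/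
theorem exists_iterate_nuca_apply_one_eq_true (n : ℕ) :
    ∀ (d : ℤ → Bool) (y : ℤ), 1 ≤ y → y ≤ n → d y = true →
      ∃ s : ℕ, (nuca θtraffic)^[s] d 1 = true := by
  induction n with
  | zero => intro d y hy₁ hyn; omega
  | succ n ih =>
    intro d y hy₁ hyn hy
    by_cases hleft : ∃ z : ℤ, 1 ≤ z ∧ z ≤ n ∧ d z = true
    · obtain ⟨z, hz₁, hzn, hz⟩ := hleft
      exact ih d z hz₁ hzn hz
    push Not at hleft
    obtain rfl : y = n + 1 := by
      by_contra hne
      exact hleft y hy₁ (by omega) hy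
    rcases Nat.eq_zero_or_pos n with rfl | hn
    · exact ⟨0, by simpa using hy⟩
    have hmove : nuca θtraffic d n = true := by
      rw [nuca_apply_of_pos _ (by omega), Bool.eq_false_iff.mpr (hleft n (by omega) le_rfl), hy]
      simp
    obtain ⟨s, hs⟩ := ih (nuca θtraffic d) n (by omega) le_rfl hmove
    exact ⟨s + 1, by rwa [Function.iterate_succ_apply]⟩

def potential (R : ℕ) (d : ℤ → Bool) : ℕ :=
  ∑ j ∈ Finset.range R, (j + 1) * (d (j + 1)).toNat

/-- `!d j && d (j + 1)` says that the car at `j + 1` moves to `j`. -/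
theorem potential_nuca_add (R : ℕ) (d : ℤ → Bool) (hR : d (R + 1) = false) :
    potential R (nuca θtraffic d) + ∑ j ∈ Finset.range R, (!d j && d (j + 1)).toNat =
      potential R d := by
  set m : ℕ → ℕ := fun j => (!d j && d (j + 1)).toNat with hm
  have hcell (j : ℕ) :
      (nuca θtraffic d (j + 1)).toNat + m j = (d (j + 1)).toNat + m (j + 1) := by
    rw [nuca_apply_of_pos _ (by omega), add_sub_cancel_right, hm]
    push_cast
    cases d j <;> cases d (j + 1) <;> cases d (j + 1 + 1) <;> rfl
  have hshift : ∑ j ∈ Finset.range R, (j + 1) * m (j + 1) = ∑ j ∈ Finset.range R, j * m j := by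
    have hmR : m R = 0 := by simp [hm, hR]
    simpa [Finset.sum_range_succ, hmR] using (Finset.sum_range_succ' (fun j => j * m j) R).symm
  have hsum : potential R (nuca θtraffic d) + ∑ j ∈ Finset.range R, (j + 1) * m j =
      potential R d + ∑ j ∈ Finset.range R, (j + 1) * m (j + 1) := by
    simp only [potential, ← Finset.sum_add_distrib, ← mul_add]
    exact Finset.sum_congr rfl fun j _ => by rw [hcell j]
  have hsplit : ∑ j ∈ Finset.range R, (j + 1) * m j =
      ∑ j ∈ Finset.range R, j * m j + ∑ j ∈ Finset.range R, m j := by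
    simp only [add_mul, one_mul, Finset.sum_add_distrib]
  simp only [hm] at hsum hsplit hshift ⊢
  omega

theorem exists_false_true_of_apply_zero_eq_false {d : ℤ → Bool} (h₀ : d 0 = false) :
    ∀ y : ℕ, d y = true → ∃ j < y, d j = false ∧ d (j + 1) = true := by
  intro y
  induction y with
  | zero => simp [h₀]
  | succ y ih =>
    intro hy
    cases hdy : d y
    · exact ⟨y, by omega, hdy, by exact_mod_cast hy⟩
    · obtain ⟨j, hj, hj'⟩ := ih hdy
      exact ⟨j, by omega, hj'⟩

theorem potential_nuca_lt {R : ℕ} {d : ℤ → Bool} (h₀ : d 0 = false) (hR : d (R + 1) = false)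
    {y : ℕ} (hyR : y ≤ R) (hy : d y = true) :
    potential R (nuca θtraffic d) < potential R d := by
  obtain ⟨j, hjy, hj, hj'⟩ := exists_false_true_of_apply_zero_eq_false h₀ y hy
  have hmove : 0 < ∑ j ∈ Finset.range R, (!d j && d (j + 1)).toNat :=
    Finset.sum_pos' (fun _ _ => Nat.zero_le _)
      ⟨j, Finset.mem_range.mpr (by omega), by simp [hj, hj']⟩
  have := potential_nuca_add R d hR
  omega

theorem exists_iterate_nuca_eq_false_of_pos (R : ℕ) (d : ℤ → Bool) (h₀ : d 0 = false)
    (hR : ∀ x : ℤ, R < x → d x = false) :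
    ∃ T : ℕ, ∀ x, 0 < x → (nuca θtraffic)^[T] d x = false := by
  induction hP : potential R d using Nat.strong_induction_on generalizing d with
  | _ P ih =>
    by_cases hcar : ∃ y : ℕ, y ≤ R ∧ d y = true
    · obtain ⟨y, hyR, hy⟩ := hcar
      have h₀' : nuca θtraffic d 0 = false := by rwa [nuca_apply_of_nonpos _ le_rfl]
      have hR' (x : ℤ) (hx : R < x) : nuca θtraffic d x = false := by
        rw [nuca_apply_of_pos _ (by omega), hR x hx, hR (x + 1) (by omega)]
        simp
      obtain ⟨T, hT⟩ := ih _ (hP ▸ potential_nuca_lt h₀ (hR _ (by omega)) hyR hy) _ h₀' hR' rfl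
      exact ⟨T + 1, by rwa [Function.iterate_succ_apply]⟩
    · push Not at hcar
      refine ⟨0, fun x hx => ?_⟩
      rcases le_or_gt x R with hxR | hxR
      · lift x to ℕ using hx.le
        simpa using hcar x (by exact_mod_cast hxR)
      · exact hR x hxR

/-- Outside a window `D ⊆ (-∞, R]`, fill in either no cars or only cars beyond `R`: the first
configuration empties the positive cells for good, while in the second the infinite jam beyond
`R` keeps sending cars to cell `1`. -/
theorem not_eqPt_of_apply_zero_eq_false {c : ℤ → Bool} (hc : c 0 = false) :
    ¬ EqPt θtraffic c := by
  intro hEq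
  obtain ⟨D, hD⟩ := hEq {1}
  obtain ⟨M, hM⟩ := D.bddAbove
  set R := M.toNat
  have hDR (x : ℤ) (hx : x ∈ D) : x ≤ R := (hM hx).trans (Int.self_le_toNat M)
  set e₁ : ℤ → Bool := fun x => if x ∈ D then c x else false
  set e₂ : ℤ → Bool := fun x => if x ∈ D then c x else decide ((R : ℤ) < x)
  have he₁ (x : ℤ) (hx : x ∈ D) : e₁ x = c x := if_pos hx
  have he₂ (x : ℤ) (hx : x ∈ D) : e₂ x = c x := if_pos hx
  have he₁R (x : ℤ) (hx : R < x) : e₁ x = false := if_neg fun hxD => by linarith [hDR x hxD]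
  obtain ⟨T, hT⟩ := exists_iterate_nuca_eq_false_of_pos R e₁
    (by by_cases h : (0 : ℤ) ∈ D <;> simp [e₁, h, hc]) he₁R
  have hcar : (nuca θtraffic)^[T + 1] e₂ (R + 1 + (T + 1 : ℕ)) = true := by
    rw [iterate_nuca_apply_eq_of_eqOn isLocalRule (d' := fun _ => true),
      Function.iterate_fixed nuca_const_true]
    intro z ⟨hz, _⟩
    push_cast at hz
    have hzD : z ∉ D := fun hzD => by linarith [hDR z hzD]
    simp only [e₂, if_neg hzD, decide_eq_true_eq]
    omega
  obtain ⟨s, hs⟩ := exists_iterate_nuca_apply_one_eq_true (R + 1 + (T + 1)) _ _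
    (by omega) (by push_cast; rfl) hcar
  rw [← Function.iterate_add_apply] at hs
  have h₁ := hD e₁ he₁ (s + (T + 1)) (by omega) 1 (Finset.mem_singleton_self 1)
  have h₂ := hD e₂ he₂ (s + (T + 1)) (by omega) 1 (Finset.mem_singleton_self 1)
  have hdead : (nuca θtraffic)^[s + (T + 1)] e₁ 1 = false := by
    rw [show s + (T + 1) = (s + 1) + T by omega, Function.iterate_add_apply]
    exact iterate_nuca_apply_eq_false_of_pos hT _ 1 one_pos
  rw [← h₂, hs, hdead] at h₁
  exact Bool.false_ne_true h₁

theorem not_dense_eqPt : ¬ Dense {c | EqPt θtraffic c} := by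
  intro hdense
  have hopen : IsOpen ((fun c : ℤ → Bool => c 0) ⁻¹' {false}) :=
    (isOpen_discrete _).preimage (continuous_apply 0)
  obtain ⟨c, hc, hc₀⟩ := hdense.exists_mem_open hopen ⟨fun _ => false, rfl⟩
  exact not_eqPt_of_apply_zero_eq_false hc₀ hc

end θtraffic

/-- There is a radius-1 NUCA on a two-letter alphabet whose set of equicontinuity
points is nonempty and not residual (indeed not dense). -/
theorem stmt_9 :
    ∃ θ : ℤ → ((ℤ → Bool) → Bool),
      (∀ x, IsLocalRule 1 (θ x)) ∧ (Set.range θ).Finite ∧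
      {c : ℤ → Bool | EqPt θ c}.Nonempty ∧
      ¬ Dense {c : ℤ → Bool | EqPt θ c} ∧
      {c : ℤ → Bool | EqPt θ c} ∉ residual (ℤ → Bool) :=
  ⟨θtraffic, θtraffic.isLocalRule, θtraffic.finite_range, ⟨_, θtraffic.eqPt_const_true⟩,
    θtraffic.not_dense_eqPt, fun h => θtraffic.not_dense_eqPt (dense_of_mem_residual h)⟩
end

section
/- In the NUCA of the previous construction (traffic rule τ on positive cells, identity on nonpositive cells, Σ = {0,1}), the all-ones configuration is an equicontinuity point. -/
open Function

open Set

def cylinder {A : Type*} (c : ℤ → A) (D : Finset ℤ) : Set (ℤ → A) :=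
  {e | ∀ x ∈ D, e x = c x}

lemma mem_cylinder_self {A : Type*} (c : ℤ → A) (D : Finset ℤ) : c ∈ cylinder c D :=
  fun _ _ => rfl

lemma eqPt_of_forall_exists_mapsTo_cylinder {A : Type*} {θ : ℤ → ((ℤ → A) → A)} {c : ℤ → A}
    (h : ∀ E : Finset ℤ, ∃ D : Finset ℤ, E ⊆ D ∧
      MapsTo (nuca θ) (cylinder c D) (cylinder c D)) :
    EqPt θ c := by
  intro E
  obtain ⟨D, hED, hinv⟩ := h E
  refine ⟨D, fun e he n _ x hx => ?_⟩
  have he_orbit := hinv.iterate n he x (hED hx)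
  have hc_orbit := hinv.iterate n (mem_cylinder_self c D) x (hED hx)
  rw [he_orbit, hc_orbit]

lemma Finset.subset_Icc_neg_sup_natAbs (E : Finset ℤ) :
    E ⊆ Finset.Icc (-((E.sup Int.natAbs : ℕ) : ℤ)) (E.sup Int.natAbs : ℕ) := by
  intro x hx
  have hle : x.natAbs ≤ E.sup Int.natAbs := Finset.le_sup hx
  rw [Finset.mem_Icc]
  omega

lemma tau_eq_true {u : ℤ → Bool} (hl : u (-1) = true) (h0 : u 0 = true) : tau u = true := by
  simp [tau, hl, h0]

/-- A cell `x > 0` of the interval has its left neighbour `x - 1 ≥ a` in the interval too,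
and the traffic rule keeps a car whose left neighbour is occupied. -/
lemma mapsTo_nuca_θtraffic_cylinder_Icc {a : ℤ} (ha : a ≤ 0) (b : ℤ) :
    MapsTo (nuca θtraffic) (cylinder (fun _ => true) (Finset.Icc a b))
      (cylinder (fun _ => true) (Finset.Icc a b)) := by
  intro e he x hx
  have hx' := Finset.mem_Icc.mp hx
  unfold nuca θtraffic
  split_ifs with hpos
  · exact tau_eq_true (he (x + -1) (Finset.mem_Icc.mpr ⟨by omega, by omega⟩))
      (by simpa using he x hx)
  · simpa [idRule] using he x hx

/-- The all-ones configuration is an equicontinuity point of the traffic/identity NUCA. -/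
theorem stmt_10 : EqPt θtraffic (fun _ => true) :=
  eqPt_of_forall_exists_mapsTo_cylinder fun E =>
    ⟨_, E.subset_Icc_neg_sup_natAbs, mapsTo_nuca_θtraffic_cylinder_Icc (by omega) _⟩
end

section
/- In the NUCA with θ(x) = τ (traffic) for x > 0 and identity for x ≤ 0 on Σ = {0,1}: no configuration c with c(0) = 0 is an equicontinuity point; specifically, for every finite D ∋ 1 there exist e₀, e₁ agreeing with c on D (e₀ all-zero outside D, e₁ all-one outside D) and a time t with H_θ^t(e₀)(1) ≠ H_θ^t(e₁)(1). -/
open Function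

/-! On the positive cells the traffic rule moves each 1 one cell to the left when that cell is
free, so it conserves the 1s there except at cell 1: a 1 entering the frozen cell 0 (which holds
a 0) is annihilated. Starting from `e₀`, which has only finitely many 1s on the positive cells,
cell 1 therefore holds a 1 only finitely often. Starting from `e₁`, the infinite block of 1s on
the right keeps feeding 1s into cell 1, which thus holds a 1 infinitely often. -/

lemma nuca_θtraffic_of_pos (u : ℤ → Bool) {x : ℤ} (hx : 0 < x) :
    nuca θtraffic u x =
      if u (x - 1) = false ∧ u x = true then false
      else if u x = false ∧ u (x + 1) = true then true else u x := by
  simp only [nuca, θtraffic, if_pos hx, tau, add_zero, ← sub_eq_add_neg]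

lemma iterate_nuca_θtraffic_of_nonpos (u : ℤ → Bool) {x : ℤ} (hx : x ≤ 0) (t : ℕ) :
    (nuca θtraffic)^[t] u x = u x := by
  induction t with
  | zero => rfl
  | succ t ih =>
    rw [iterate_succ_apply', ← ih]
    simp only [nuca, θtraffic, if_neg (not_lt.mpr hx), idRule, add_zero]

/-- Whether a 1 crosses from cell `x` to cell `x - 1` in one traffic step. -/
def flux (u : ℤ → Bool) (x : ℤ) : ℕ := if u (x - 1) = false ∧ u x = true then 1 else 0

lemma toNat_nuca_θtraffic_add_flux (u : ℤ → Bool) {x : ℤ} (hx : 0 < x) :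
    (nuca θtraffic u x).toNat + flux u x = (u x).toNat + flux u (x + 1) := by
  rw [nuca_θtraffic_of_pos u hx]
  simp only [flux, add_sub_cancel_right]
  cases u (x - 1) <;> cases u x <;> cases u (x + 1) <;> rfl

def countOnes (u : ℤ → Bool) (n : ℕ) : ℕ := ∑ i ∈ Finset.range n, (u (1 + i)).toNat

lemma countOnes_nuca_θtraffic_add (u : ℤ → Bool) (n : ℕ) (h₀ : u 0 = false)
    (hn : u (1 + n) = false) :
    countOnes (nuca θtraffic u) n + (u 1).toNat = countOnes u n := by
  have hlocal := Finset.sum_congr rfl fun (i : ℕ) (_ : i ∈ Finset.range n) =>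
    toNat_nuca_θtraffic_add_flux u (x := 1 + i) (by positivity)
  rw [Finset.sum_add_distrib, Finset.sum_add_distrib] at hlocal
  have htelescope := (Finset.sum_range_succ (fun i : ℕ => flux u (1 + i)) n).symm.trans
    (Finset.sum_range_succ' (fun i : ℕ => flux u (1 + i)) n)
  simp only [Nat.cast_add, Nat.cast_one, Nat.cast_zero, add_zero, ← add_assoc] at htelescope
  have hflux₁ : flux u 1 = (u 1).toNat := by cases h : u 1 <;> simp [flux, h, h₀]
  have hfluxn : flux u (1 + n) = 0 := by simp [flux, hn]
  unfold countOnes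
  omega

lemma iterate_nuca_θtraffic_eq_false_of_ge (u : ℤ → Bool) {M : ℤ} (hM : 0 < M)
    (h : ∀ x, M ≤ x → u x = false) (t : ℕ) :
    ∀ x, M ≤ x → (nuca θtraffic)^[t] u x = false := by
  induction t with
  | zero => exact h
  | succ t ih =>
    intro x hx
    rw [iterate_succ_apply', nuca_θtraffic_of_pos _ (by omega), ih x hx, ih (x + 1) (by omega)]
    simp

lemma iterate_nuca_θtraffic_eq_true_of_ge (u : ℤ → Bool) {M : ℤ} (hM : 0 < M)
    (h : ∀ x, M ≤ x → u x = true) (t : ℕ) :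
    ∀ x, M + t ≤ x → (nuca θtraffic)^[t] u x = true := by
  induction t with
  | zero => simpa using h
  | succ t ih =>
    intro x hx
    push_cast at hx
    rw [iterate_succ_apply', nuca_θtraffic_of_pos _ (by omega), ih (x - 1) (by omega),
      ih x (by omega)]
    simp

lemma finite_setOf_iterate_nuca_θtraffic_one (u : ℤ → Bool) (n : ℕ) (h₀ : u 0 = false)
    (h : ∀ x : ℤ, 1 + (n : ℤ) ≤ x → u x = false) :
    {t | (nuca θtraffic)^[t] u 1 = true}.Finite := by
  set p : ℕ → Prop := fun t => (nuca θtraffic)^[t] u 1 = true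
  have hconserved :
      ∀ t, countOnes ((nuca θtraffic)^[t] u) n + Nat.count p t = countOnes u n := by
    intro t
    induction t with
    | zero => simp
    | succ t ih =>
      have hstep := countOnes_nuca_θtraffic_add ((nuca θtraffic)^[t] u) n
        (by rw [iterate_nuca_θtraffic_of_nonpos u le_rfl, h₀])
        (iterate_nuca_θtraffic_eq_false_of_ge u (by omega) h t _ le_rfl)
      have hp : (if p t then 1 else 0) = ((nuca θtraffic)^[t] u 1).toNat := by
        by_cases hu : (nuca θtraffic)^[t] u 1 = true <;> simp [p, hu]
      rw [iterate_succ_apply', Nat.count_succ, hp]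
      omega
  by_contra hinf
  obtain ⟨t, ht⟩ := Nat.surjective_count_of_infinite_setOfPred (p := p) hinf (countOnes u n + 1)
  have := hconserved t
  omega

lemma exists_ge_iterate_nuca_θtraffic_one (u : ℤ → Bool) (k t : ℕ)
    (h : (nuca θtraffic)^[t] u (1 + k) = true) :
    ∃ s, t ≤ s ∧ (nuca θtraffic)^[s] u 1 = true := by
  induction k generalizing t with
  | zero => exact ⟨t, le_rfl, by simpa using h⟩
  | succ k ih =>
    by_cases hk : (nuca θtraffic)^[t] u (1 + k) = true
    · exact ih t hk
    have hmoved : (nuca θtraffic)^[t + 1] u (1 + k) = true := by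
      rw [iterate_succ_apply', nuca_θtraffic_of_pos _ (by omega)]
      push_cast at h
      simp_all [add_assoc]
    obtain ⟨s, hs, hs'⟩ := ih (t + 1) hmoved
    exact ⟨s, by omega, hs'⟩

lemma infinite_setOf_iterate_nuca_θtraffic_one (u : ℤ → Bool) (n : ℕ)
    (h : ∀ x : ℤ, 1 + (n : ℤ) ≤ x → u x = true) :
    {t | (nuca θtraffic)^[t] u 1 = true}.Infinite := by
  refine Set.infinite_of_forall_exists_gt fun t => ?_
  obtain ⟨s, hs, hs'⟩ := exists_ge_iterate_nuca_θtraffic_one u (n + (t + 1)) (t + 1)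
    (iterate_nuca_θtraffic_eq_true_of_ge u (by omega) h (t + 1) _ (by push_cast; omega))
  exact ⟨s, hs', hs⟩

lemma exists_iterate_nuca_θtraffic_one_ne (e₀ e₁ : ℤ → Bool) (n : ℕ) (h₀ : e₀ 0 = false)
    (he₀ : ∀ x : ℤ, 1 + (n : ℤ) ≤ x → e₀ x = false)
    (he₁ : ∀ x : ℤ, 1 + (n : ℤ) ≤ x → e₁ x = true) :
    ∃ t, (nuca θtraffic)^[t] e₀ 1 ≠ (nuca θtraffic)^[t] e₁ 1 := by
  obtain ⟨t, ht₁, ht₀⟩ := ((infinite_setOf_iterate_nuca_θtraffic_one e₁ n he₁).sdiff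
    (finite_setOf_iterate_nuca_θtraffic_one e₀ n h₀ he₀)).nonempty
  exact ⟨t, fun h => ht₀ (h.trans ht₁)⟩

lemma not_eqPt_of_forall_exists_iterate_ne {A : Type*} {θ : ℤ → ((ℤ → A) → A)} {c : ℤ → A}
    (x : ℤ) (h : ∀ D : Finset ℤ, x ∈ D → ∃ e₀ e₁ : ℤ → A,
      (∀ y ∈ D, e₀ y = c y) ∧ (∀ y ∈ D, e₁ y = c y) ∧
      ∃ t : ℕ, (nuca θ)^[t] e₀ x ≠ (nuca θ)^[t] e₁ x) :
    ¬ EqPt θ c := by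
  intro hc
  obtain ⟨D, hD⟩ := hc {x}
  obtain ⟨e₀, e₁, h₀, h₁, t, ht⟩ := h (insert x D) (Finset.mem_insert_self x D)
  rcases Nat.eq_zero_or_pos t with rfl | hpos
  · exact ht ((h₀ x (D.mem_insert_self x)).trans (h₁ x (D.mem_insert_self x)).symm)
  · have hx : x ∈ ({x} : Finset ℤ) := Finset.mem_singleton_self x
    exact ht ((hD e₀ (fun y hy => h₀ y (D.mem_insert_of_mem hy)) t hpos x hx).trans
      (hD e₁ (fun y hy => h₁ y (D.mem_insert_of_mem hy)) t hpos x hx).symm)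

lemma exists_extensions_iterate_nuca_θtraffic_one_ne (c : ℤ → Bool) (hc : c 0 = false)
    (D : Finset ℤ) :
    ∃ e₀ e₁ : ℤ → Bool,
      (∀ x ∈ D, e₀ x = c x) ∧ (∀ x ∈ D, e₁ x = c x) ∧
      (∀ x ∉ D, e₀ x = false) ∧ (∀ x ∉ D, e₁ x = true) ∧
      ∃ t : ℕ, (nuca θtraffic)^[t] e₀ 1 ≠ (nuca θtraffic)^[t] e₁ 1 := by
  obtain ⟨b, hb⟩ := D.bddAbove
  have hout : ∀ x : ℤ, 1 + (b.toNat : ℤ) ≤ x → x ∉ D := fun x hx hxD => by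
    have := hb hxD
    have := Int.self_le_toNat b
    omega
  refine ⟨fun x => if x ∈ D then c x else false, fun x => if x ∈ D then c x else true,
    fun x hx => if_pos hx, fun x hx => if_pos hx, fun x hx => if_neg hx,
    fun x hx => if_neg hx, exists_iterate_nuca_θtraffic_one_ne _ _ b.toNat (by simp [hc])
    (fun x hx => if_neg (hout x hx)) (fun x hx => if_neg (hout x hx))⟩

/-- No configuration with a 0 at the origin is an equicontinuity point of the
traffic/identity NUCA: for every finite domain D containing cell 1, the extensions of
c|D by all-0 and by all-1 outside D eventually disagree at cell 1. -/
theorem stmt_11 (c : ℤ → Bool) (hc : c 0 = false) :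
    ¬ EqPt θtraffic c ∧
    ∀ D : Finset ℤ, (1 : ℤ) ∈ D →
      ∃ e₀ e₁ : ℤ → Bool,
        (∀ x ∈ D, e₀ x = c x) ∧ (∀ x ∈ D, e₁ x = c x) ∧
        (∀ x ∉ D, e₀ x = false) ∧ (∀ x ∉ D, e₁ x = true) ∧
        ∃ t : ℕ, (nuca θtraffic)^[t] e₀ 1 ≠ (nuca θtraffic)^[t] e₁ 1 := by
  refine ⟨not_eqPt_of_forall_exists_iterate_ne 1 fun D _ => ?_,
    fun D _ => exists_extensions_iterate_nuca_θtraffic_one_ne c hc D⟩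
  obtain ⟨e₀, e₁, h₀, h₁, -, -, ht⟩ := exists_extensions_iterate_nuca_θtraffic_one_ne c hc D
  exact ⟨e₀, e₁, h₀, h₁, ht⟩
end

section
/- There exists a finite alphabet Σ and a rule distribution θ over a two-element rule set such that the NUCA H_θ is not sensitive and has no equicontinuity points. -/
open Function

/-!
Cells `x ≤ 0` are frozen and cells `x > 0` follow `f`. The letters `1` and `2` are
never created, and `3` only travels leftward through cells that are not `2`. A pattern `1…12` on
`[0, j]` is therefore invariant: it fixes every cell up to `j`, so the automaton is not sensitive.
Conversely, every configuration `c` has a cell `p ≥ 1` right of all its blocking patterns. Extend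
the restriction of `c` to any finite window once by `0` and once by `0`s followed by a tail of
`3`s: in the second extension the tail sweeps leftward until it reaches `p`, while in the first
one no `3` can ever appear at `p`, so `c` is not an equicontinuity point.
-/

namespace BlockingNuca

open Filter

def f : Fin 4 → Fin 4 → Fin 4 → Fin 4
  | _, 0, 3 => 3
  | 1, 1, 1 => 1
  | 1, 1, 2 => 1
  | _, 1, 3 => 3
  | 1, 2, _ => 2
  | _, 3, 3 => 3
  | _, _, _ => 0

theorem f_eq_one : ∀ a b c, f a b c = 1 → a = 1 ∧ b = 1 := by decide

theorem f_eq_two : ∀ a b c, f a b c = 2 → a = 1 ∧ b = 2 := by decide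

theorem f_eq_three : ∀ a b c, f a b c = 3 → c = 3 := by decide

theorem f_three_of_ne_two : ∀ a b, b ≠ 2 → f a b 3 = 3 := by decide

theorem f_one_one_of_eq_one_or_two : ∀ c, c = 1 ∨ c = 2 → f 1 1 c = 1 := by decide

theorem f_one_two : ∀ c, f 1 2 c = 2 := by decide

def idRule : (ℤ → Fin 4) → Fin 4 := fun u => u 0

def fRule : (ℤ → Fin 4) → Fin 4 := fun u => f (u (-1)) (u 0) (u 1)

def θ : ℤ → (ℤ → Fin 4) → Fin 4 := fun x => if x ≤ 0 then idRule else fRule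

theorem isLocalRule_θ (x : ℤ) : IsLocalRule 1 (θ x) := by
  intro u v h
  by_cases hx : x ≤ 0
  · simpa [θ, hx, idRule] using h 0 (by norm_num) (by norm_num)
  · simp only [θ, if_neg hx, fRule]
    rw [h (-1) (by norm_num) (by norm_num), h 0 (by norm_num) (by norm_num),
      h 1 (by norm_num) (by norm_num)]

theorem range_θ_subset : Set.range θ ⊆ {idRule, fRule} := by
  rintro _ ⟨x, rfl⟩
  by_cases hx : x ≤ 0 <;> simp [θ, hx]

theorem range_θ_ncard_le : (Set.range θ).ncard ≤ 2 :=
  calc (Set.range θ).ncard ≤ ({idRule, fRule} : Set _).ncard := Set.ncard_le_ncard range_θ_subset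
    _ ≤ ({fRule} : Set _).ncard + 1 := Set.ncard_insert_le _ _
    _ = 2 := by rw [Set.ncard_singleton]

abbrev H : (ℤ → Fin 4) → ℤ → Fin 4 := nuca θ

theorem H_of_nonpos (c : ℤ → Fin 4) {x : ℤ} (hx : x ≤ 0) : H c x = c x := by
  simp [H, nuca, θ, idRule, hx]

theorem H_of_pos (c : ℤ → Fin 4) {x : ℤ} (hx : 0 < x) :
    H c x = f (c (x - 1)) (c x) (c (x + 1)) := by
  simp only [H, nuca, θ, if_neg (not_le.2 hx), fRule, add_zero, ← sub_eq_add_neg]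

theorem iterate_H_of_nonpos (c : ℤ → Fin 4) {x : ℤ} (hx : x ≤ 0) (n : ℕ) : H^[n] c x = c x := by
  induction n with
  | zero => rfl
  | succ n ih => rw [Function.iterate_succ_apply', H_of_nonpos _ hx, ih]

theorem iterate_succ_H_of_pos (c : ℤ → Fin 4) {x : ℤ} (hx : 0 < x) (n : ℕ) :
    H^[n + 1] c x = f (H^[n] c (x - 1)) (H^[n] c x) (H^[n] c (x + 1)) := by
  rw [Function.iterate_succ_apply', H_of_pos _ hx]

theorem eq_one_of_iterate_H_eq_one (e : ℤ → Fin 4) (n : ℕ) {x : ℤ} (h : H^[n] e x = 1)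
    {y : ℤ} (hy₀ : 0 ≤ y) (hyn : x - n ≤ y) (hyx : y ≤ x) : e y = 1 := by
  induction n generalizing x with
  | zero =>
    obtain rfl : y = x := by omega
    exact h
  | succ n ih =>
    rcases le_or_gt x 0 with hx | hx
    · rw [iterate_H_of_nonpos _ hx] at h
      obtain rfl : y = x := by omega
      exact h
    rw [iterate_succ_H_of_pos _ hx] at h
    obtain ⟨hl, hc⟩ := f_eq_one _ _ _ h
    rcases lt_or_eq_of_le hyx with hyx | rfl
    · exact ih hl (by omega) (by omega)
    · exact ih hc (by omega) le_rfl

theorem eq_two_of_iterate_H_eq_two (e : ℤ → Fin 4) (n : ℕ) {x : ℤ} (h : H^[n] e x = 2) :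
    e x = 2 ∧ ∀ y, 0 ≤ y → x - n ≤ y → y < x → e y = 1 := by
  induction n generalizing x with
  | zero => exact ⟨h, fun y _ _ _ => by omega⟩
  | succ n ih =>
    rcases le_or_gt x 0 with hx | hx
    · rw [iterate_H_of_nonpos _ hx] at h
      exact ⟨h, fun y _ _ _ => by omega⟩
    rw [iterate_succ_H_of_pos _ hx] at h
    obtain ⟨hl, hc⟩ := f_eq_two _ _ _ h
    exact ⟨(ih hc).1, fun y hy₀ hyn hyx =>
      eq_one_of_iterate_H_eq_one e n hl hy₀ (by omega) (by omega)⟩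

theorem eq_three_of_iterate_H_eq_three (e : ℤ → Fin 4) (n : ℕ) {x : ℤ} (hx : 0 < x)
    (h : H^[n] e x = 3) : e (x + n) = 3 := by
  induction n generalizing x with
  | zero => simpa using h
  | succ n ih =>
    rw [iterate_succ_H_of_pos _ hx] at h
    have := ih (by omega) (f_eq_three _ _ _ h)
    rwa [add_assoc, add_comm 1] at this

def IsBlock (c : ℤ → Fin 4) (j : ℤ) : Prop :=
  (∀ x, 0 ≤ x → x < j → c x = 1) ∧ c j = 2

theorem IsBlock.apply_H {c : ℤ → Fin 4} {j : ℤ} (hc : IsBlock c j) : IsBlock (H c) j := by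
  obtain ⟨hone, htwo⟩ := hc
  refine ⟨fun x hx₀ hxj => ?_, ?_⟩
  · rcases eq_or_lt_of_le hx₀ with rfl | hx
    · rw [H_of_nonpos _ le_rfl, hone 0 le_rfl hxj]
    rw [H_of_pos _ hx, hone (x - 1) (by omega) (by omega), hone x hx₀ hxj]
    apply f_one_one_of_eq_one_or_two
    rcases lt_or_eq_of_le (show x + 1 ≤ j by omega) with h | h
    · exact .inl (hone _ (by omega) h)
    · exact .inr (h ▸ htwo)
  · rcases le_or_gt j 0 with hj | hj
    · rwa [H_of_nonpos _ hj]
    rw [H_of_pos _ hj, hone (j - 1) (by omega) (by omega), htwo]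
    exact f_one_two _

theorem IsBlock.iterate_H {c : ℤ → Fin 4} {j : ℤ} (hc : IsBlock c j) (n : ℕ) :
    IsBlock (H^[n] c) j := by
  induction n with
  | zero => exact hc
  | succ n ih => rw [Function.iterate_succ_apply']; exact ih.apply_H

theorem IsBlock.of_iterate_H_eq_two {e : ℤ → Fin 4} {n : ℕ} {x : ℤ} (h : H^[n] e x = 2)
    (hxn : x ≤ n) : IsBlock e x :=
  have ⟨htwo, hone⟩ := eq_two_of_iterate_H_eq_two e n h
  ⟨fun y hy₀ hyx => hone y hy₀ (by omega) hyx, htwo⟩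

theorem IsBlock.iterate_H_eq {c e : ℤ → Fin 4} {j : ℤ} (hc : IsBlock c j) (he : IsBlock e j)
    (n : ℕ) {x : ℤ} (hxj : x ≤ j) (hx : e x = c x) : H^[n] e x = H^[n] c x := by
  rcases lt_or_ge x 0 with hx₀ | hx₀
  · rw [iterate_H_of_nonpos _ hx₀.le, iterate_H_of_nonpos _ hx₀.le, hx]
  rcases lt_or_eq_of_le hxj with hxj | rfl
  · rw [(he.iterate_H n).1 x hx₀ hxj, (hc.iterate_H n).1 x hx₀ hxj]
  · rw [(he.iterate_H n).2, (hc.iterate_H n).2]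

theorem not_sensitive : ¬ Sensitive θ := by
  rintro ⟨E, hE⟩
  obtain ⟨j, hj⟩ := E.bddAbove
  let c : ℤ → Fin 4 := fun x => if x = j then 2 else 1
  have hc : IsBlock c j := ⟨fun x _ hxj => if_neg hxj.ne, if_pos rfl⟩
  obtain ⟨e, heD, n, -, x, hxE, hne⟩ := hE c (insert j (E ∪ Finset.Icc 0 j))
  have he : IsBlock e j := by
    refine ⟨fun x hx₀ hxj => ?_, ?_⟩
    · rw [heD x (by simp [hx₀, hxj.le])]; exact hc.1 x hx₀ hxj
    · rw [heD j (by simp)]; exact hc.2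
  exact hne (hc.iterate_H_eq he n (hj hxE) (heD x (by simp [hxE])))

theorem IsBlock.of_agree_on_ones_twos {c e : ℤ → Fin 4} {x : ℤ}
    (hce : ∀ y, e y = 1 ∨ e y = 2 → e y = c y) (he : IsBlock e x) : IsBlock c x :=
  ⟨fun y hy₀ hyx => (hce y (.inl (he.1 y hy₀ hyx))).symm.trans (he.1 y hy₀ hyx),
    (hce x (.inr he.2)).symm.trans he.2⟩

theorem exists_forall_not_isBlock (c : ℤ → Fin 4) : ∃ p, 0 < p ∧ ∀ x, p ≤ x → ¬ IsBlock c x := by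
  by_cases h : ∃ q, 0 < q ∧ IsBlock c q
  · obtain ⟨q, hq, hcq⟩ := h
    refine ⟨q + 1, by omega, fun x hx hcx => ?_⟩
    have := hcx.1 q hq.le (by omega)
    rw [hcq.2] at this
    exact absurd this (by decide)
  · exact ⟨1, one_pos, fun x hx hcx => h ⟨x, hx, hcx⟩⟩

theorem iterate_H_eq_three_of_tail {e : ℤ → Fin 4} {R : ℤ} (hR : 0 < R)
    (he : ∀ y, R ≤ y → e y = 3) (n : ℕ) {y : ℤ} (hy : R ≤ y) : H^[n] e y = 3 := by
  induction n generalizing y with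
  | zero => exact he y hy
  | succ n ih =>
    rw [iterate_succ_H_of_pos _ (by omega), ih hy, ih (y := y + 1) (by omega)]
    exact f_three_of_ne_two _ 3 (by decide)

theorem eventually_iterate_H_eq_three_of_succ {e : ℤ → Fin 4} {x : ℤ} (hx : 0 < x)
    (hb : ¬ IsBlock e x) (h : ∀ᶠ n in atTop, H^[n] e (x + 1) = 3) :
    ∀ᶠ n in atTop, H^[n] e x = 3 := by
  have hne : ∀ᶠ n in atTop, H^[n] e x ≠ 2 := (eventually_ge_atTop x.toNat).mono
    fun n hn h2 => hb (.of_iterate_H_eq_two h2 (by omega))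
  rw [← map_add_atTop_eq_nat 1, eventually_map]
  filter_upwards [hne, h] with n hn hn3
  rw [iterate_succ_H_of_pos _ hx, hn3]
  exact f_three_of_ne_two _ _ hn

theorem eventually_iterate_H_eq_three {e : ℤ → Fin 4} {p R : ℤ} (hp : 0 < p) (hR : 0 < R)
    (he : ∀ y, R ≤ y → e y = 3) (hb : ∀ x, p ≤ x → ¬ IsBlock e x) :
    ∀ᶠ n in atTop, H^[n] e p = 3 := by
  suffices ∀ x ≤ max p R, p ≤ x → ∀ᶠ n in atTop, H^[n] e x = 3 from
    this p (le_max_left p R) le_rfl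
  intro x hx
  induction x, hx using Int.leInductionDown with
  | base => exact fun _ => .of_forall fun n => iterate_H_eq_three_of_tail hR he n (le_max_right p R)
  | pred x _ ih =>
    intro hpx
    have := ih (by omega)
    rw [← sub_add_cancel x 1] at this
    exact eventually_iterate_H_eq_three_of_succ (by omega) (hb _ hpx) this

theorem not_eqPt (c : ℤ → Fin 4) : ¬ EqPt θ c := by
  intro hc
  obtain ⟨p, hp, hpc⟩ := exists_forall_not_isBlock c
  obtain ⟨D, hD⟩ := hc {p}
  obtain ⟨R₀, hR₀⟩ := D.bddAbove
  set R := max R₀ 0 + 1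
  have hRD : ∀ y, R ≤ y → y ∉ D := fun y hy hyD => by have := hR₀ hyD; omega
  let e₀ : ℤ → Fin 4 := fun x => if x ∈ D then c x else 0
  let e₃ : ℤ → Fin 4 := fun x => if x ∈ D then c x else if R ≤ x then 3 else 0
  have he₃ : ∀ y, R ≤ y → e₃ y = 3 := fun y hy => by simp [e₃, hRD y hy, hy]
  have hb : ∀ x, p ≤ x → ¬ IsBlock e₃ x := fun x hx hx₃ =>
    hpc x hx (hx₃.of_agree_on_ones_twos fun y hy => by
      by_cases hyD : y ∈ D
      · simp [e₃, hyD]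
      · by_cases hRy : R ≤ y <;> simp [e₃, hyD, hRy] at hy)
  obtain ⟨n, hn, hRn⟩ := ((eventually_iterate_H_eq_three hp (by omega) he₃ hb).and
    (eventually_ge_atTop R.toNat)).exists
  have h₀ : H^[n] e₀ p ≠ 3 := fun h => by
    have := eq_three_of_iterate_H_eq_three e₀ n hp h
    simp [e₀, hRD (p + n) (by omega)] at this
  have hagree : ∀ e : ℤ → Fin 4, (∀ x ∈ D, e x = c x) → H^[n] e p = H^[n] c p := fun e he =>
    hD e he n (by omega) p (Finset.mem_singleton_self p)
  rw [hagree e₀ fun x hx => if_pos hx, ← hagree e₃ fun x hx => if_pos hx] at h₀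
  exact h₀ hn

end BlockingNuca

/-- There is a finite alphabet and a rule distribution over a two-element rule set whose
NUCA is not sensitive and has no equicontinuity points. -/
theorem stmt_12 :
    ∃ (A : Type) (_ : Fintype A) (r : ℕ) (θ : ℤ → ((ℤ → A) → A)),
      (∀ x, IsLocalRule r (θ x)) ∧ (Set.range θ).Finite ∧
      (Set.range θ).ncard ≤ 2 ∧
      ¬ Sensitive θ ∧ (∀ c : ℤ → A, ¬ EqPt θ c) :=
  ⟨Fin 4, inferInstance, 1, BlockingNuca.θ, BlockingNuca.isLocalRule_θ,
    (Set.toFinite _).subset BlockingNuca.range_θ_subset, BlockingNuca.range_θ_ncard_le,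
    BlockingNuca.not_sensitive, BlockingNuca.not_eqPt⟩
end

section
/- Let Σ = ℤ/2, and consider the rule distribution θ = …f_R f_R g f_L f_L… (i.e., θ(x) = f_R for x < 0, θ(0) = g, θ(x) = f_L for x > 0), where f_L(a,b,c) = a⊕b, f_R(a,b,c) = b⊕c, g(a,b,c) = b. Then H_θ is bijective but not reversible: there is no NUCA with a finite rule set whose global map is H_θ^{-1}. -/
/-!
Cell `0` is copied and every other cell is XORed with its neighbour towards `0`, so a
configuration is recovered from its image by summing the image from `0` outward. This inverse is not local: the all-one configuration maps to
the indicator of `0` and the all-zero one to itself, so the two images agree far from `0`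
while the preimages differ everywhere, and no rule of bounded radius can tell them apart.
-/

open Function

/-- The distribution …f_R f_R g f_L f_L…. -/
def θ16 : ℤ → ((ℤ → ZMod 2) → ZMod 2) :=
  fun x => if x < 0 then fR else if x = 0 then gId else fL

open Finset

lemma nuca_θ16_apply_of_neg (c : ℤ → ZMod 2) {x : ℤ} (hx : x < 0) :
    nuca θ16 c x = c x + c (x + 1) := by
  simp only [nuca, θ16, if_pos hx, fR, add_zero]

lemma nuca_θ16_apply_zero (c : ℤ → ZMod 2) : nuca θ16 c 0 = c 0 := by
  simp [nuca, θ16, gId]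

lemma nuca_θ16_apply_of_pos (c : ℤ → ZMod 2) {x : ℤ} (hx : 0 < x) :
    nuca θ16 c x = c (x - 1) + c x := by
  simp only [nuca, θ16, if_neg hx.not_gt, if_neg hx.ne', fL, add_zero, ← sub_eq_add_neg]

lemma uIcc_zero_add_one {x : ℤ} (hx : 0 ≤ x) : uIcc 0 (x + 1) = insert (x + 1) (uIcc 0 x) := by
  ext j; simp only [mem_uIcc, mem_insert]; omega

lemma uIcc_zero_sub_one {x : ℤ} (hx : x ≤ 0) : uIcc 0 (x - 1) = insert (x - 1) (uIcc 0 x) := by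
  ext j; simp only [mem_uIcc, mem_insert]; omega

def θ16Inv (d : ℤ → ZMod 2) : ℤ → ZMod 2 :=
  fun x => ∑ j ∈ uIcc 0 x, d j

lemma θ16Inv_zero (d : ℤ → ZMod 2) : θ16Inv d 0 = d 0 := by
  simp [θ16Inv]

lemma θ16Inv_add_one (d : ℤ → ZMod 2) {x : ℤ} (hx : 0 ≤ x) :
    θ16Inv d (x + 1) = θ16Inv d x + d (x + 1) := by
  rw [θ16Inv, θ16Inv, uIcc_zero_add_one hx, sum_insert (by simp only [mem_uIcc]; omega),
    add_comm]

lemma θ16Inv_sub_one (d : ℤ → ZMod 2) {x : ℤ} (hx : x ≤ 0) :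
    θ16Inv d (x - 1) = d (x - 1) + θ16Inv d x := by
  rw [θ16Inv, θ16Inv, uIcc_zero_sub_one hx, sum_insert (by simp only [mem_uIcc]; omega)]

lemma leftInverse_θ16Inv : LeftInverse θ16Inv (nuca θ16) := by
  intro c
  funext x
  induction x using Int.induction_on with
  | zero => rw [θ16Inv_zero, nuca_θ16_apply_zero]
  | succ i ih =>
    rw [θ16Inv_add_one _ (by positivity), ih, nuca_θ16_apply_of_pos _ (by positivity),
      add_sub_cancel_right, CharTwo.add_cancel_left]
  | pred i ih =>
    rw [θ16Inv_sub_one _ (by omega), nuca_θ16_apply_of_neg _ (by omega), sub_add_cancel, ih,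
      CharTwo.add_cancel_right]

lemma rightInverse_θ16Inv : RightInverse θ16Inv (nuca θ16) := by
  intro d
  funext x
  rcases lt_trichotomy x 0 with hx | rfl | hx
  · have h := θ16Inv_sub_one d (x := x + 1) (by omega)
    rw [add_sub_cancel_right] at h
    rw [nuca_θ16_apply_of_neg _ hx, h, CharTwo.add_cancel_right]
  · rw [nuca_θ16_apply_zero, θ16Inv_zero]
  · have h := θ16Inv_add_one d (x := x - 1) (by omega)
    rw [sub_add_cancel] at h
    rw [nuca_θ16_apply_of_pos _ hx, h, CharTwo.add_cancel_left]

lemma nuca_θ16_one : nuca θ16 1 = Pi.single 0 1 := by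
  funext x
  rcases lt_trichotomy x 0 with hx | rfl | hx
  · rw [nuca_θ16_apply_of_neg _ hx, Pi.single_eq_of_ne hx.ne]
    exact CharTwo.add_self_eq_zero 1
  · rw [nuca_θ16_apply_zero, Pi.single_eq_same]; rfl
  · rw [nuca_θ16_apply_of_pos _ hx, Pi.single_eq_of_ne hx.ne']
    exact CharTwo.add_self_eq_zero 1

lemma nuca_θ16_zero : nuca θ16 0 = 0 := by
  funext x
  rcases lt_trichotomy x 0 with hx | rfl | hx
  · rw [nuca_θ16_apply_of_neg _ hx]; simp
  · rw [nuca_θ16_apply_zero]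
  · rw [nuca_θ16_apply_of_pos _ hx]; simp

lemma nuca_apply_eq_of_eqOn_s16 {A : Type*} {φ : ℤ → ((ℤ → A) → A)} {s : ℕ} {x : ℤ}
    (hφ : IsLocalRule s (φ x)) {c d : ℤ → A}
    (hcd : ∀ i, x - s ≤ i → i ≤ x + s → c i = d i) : nuca φ c x = nuca φ d x :=
  hφ _ _ fun i hi₁ hi₂ => hcd (x + i) (by omega) (by omega)

lemma eq_of_leftInverse_of_eqOn {A : Type*} {F : (ℤ → A) → ℤ → A} {φ : ℤ → ((ℤ → A) → A)}
    {s : ℕ} (hφ : ∀ x, IsLocalRule s (φ x)) (hinv : LeftInverse (nuca φ) F) {c d : ℤ → A}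
    {x : ℤ} (hcd : ∀ i, x - s ≤ i → i ≤ x + s → F c i = F d i) : c x = d x := by
  rw [← hinv c, ← hinv d]
  exact nuca_apply_eq_of_eqOn_s16 (hφ x) hcd

/-- The NUCA with distribution …f_R f_R g f_L f_L… is bijective but not reversible. -/
theorem stmt_16 :
    Function.Bijective (nuca θ16) ∧
    ¬ ∃ (s : ℕ) (φ : ℤ → ((ℤ → ZMod 2) → ZMod 2)), (Set.range φ).Finite ∧
        (∀ x, IsLocalRule s (φ x)) ∧
        (∀ c, nuca φ (nuca θ16 c) = c) ∧ (∀ c, nuca θ16 (nuca φ c) = c) := by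
  refine ⟨bijective_iff_has_inverse.mpr ⟨θ16Inv, leftInverse_θ16Inv, rightInverse_θ16Inv⟩, ?_⟩
  rintro ⟨s, φ, -, hφ, hinv, -⟩
  have hagree : ∀ i, -(s : ℤ) - 1 - s ≤ i → i ≤ -(s : ℤ) - 1 + s →
      nuca θ16 1 i = nuca θ16 0 i := by
    intro i _ hi
    rw [nuca_θ16_one, nuca_θ16_zero, Pi.single_eq_of_ne (by omega)]
    rfl
  exact one_ne_zero (eq_of_leftInverse_of_eqOn hφ hinv hagree)
end
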